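/- arXiv:2007.14204 — 6 statements merged into one kernel-verified Lean document; each statement's English description precedes it below -/
import Mathlib

section
/- For every eps ∈ (0,1) there exists a constant c > 0 such that for all sufficiently large m there exist a finite simple unweighted graph G=(V,E) with exactly m edges, a (1±eps)-spectral sparsifier H of G, and an edge {u,v} ∈ E with {u,v} ∉ E_H and d_{hat H}(u,v) ≥ c * sqrt(m) / (log m)^{3/2}. In particular, the stretch guarantee sqrt(m) (up to polylogarithmic factors) for unweighted versions of spectral sparsifiers is tight. -/
open scoped Classical
open Finset

/-- Laplacian quadratic form of a (weighted) graph: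
`x ↦ ∑_{edges {u,v}} w(u,v) * (x u - x v)^2` (each edge counted once). -/
noncomputable def lapQF {V : Type*} [Fintype V] (H : SimpleGraph V) (w : V → V → ℝ)
    (x : V → ℝ) : ℝ :=
  (1 / 2) * ∑ u : V, ∑ v : V, if H.Adj u v then w u v * (x u - x v) ^ 2 else 0

/-- Total weight of edges of `H` with one endpoint in `X` and the other in `Y`
(intended for disjoint `X`, `Y`). -/
noncomputable def cutWeight {V : Type*} [Fintype V] (H : SimpleGraph V) (w : V → V → ℝ)
    (X Y : Set V) : ℝ :=
  ∑ u : V, ∑ v : V, if u ∈ X ∧ v ∈ Y ∧ H.Adj u v then w u v else 0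

/-- `H` (with positive symmetric weights `w`) is a `(1 ± eps)`-spectral sparsifier of the
unweighted graph `G`. -/
def IsSpectralSparsifier {V : Type*} [Fintype V] (G H : SimpleGraph V) (w : V → V → ℝ)
    (eps : ℝ) : Prop :=
  H ≤ G ∧ (∀ u v, H.Adj u v → 0 < w u v) ∧ (∀ u v, w u v = w v u) ∧
    ∀ x : V → ℝ,
      (1 - eps) * lapQF H w x ≤ lapQF G (fun _ _ => 1) x ∧
        lapQF G (fun _ _ => 1) x ≤ (1 + eps) * lapQF H w x

/-- `H` (with positive symmetric weights `w`) is a `(1 ± eps)`-cut sparsifier of the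
unweighted graph `G`. -/
def IsCutSparsifier {V : Type*} [Fintype V] (G H : SimpleGraph V) (w : V → V → ℝ)
    (eps : ℝ) : Prop :=
  H ≤ G ∧ (∀ u v, H.Adj u v → 0 < w u v) ∧ (∀ u v, w u v = w v u) ∧
    ∀ S : Set V,
      (1 - eps) * cutWeight H w S Sᶜ ≤ cutWeight G (fun _ _ => 1) S Sᶜ ∧
        cutWeight G (fun _ _ => 1) S Sᶜ ≤ (1 + eps) * cutWeight H w S Sᶜ

/-- Effective resistance between `u` and `v` in the weighted graph `(H, w)`, via the
variational characterization `R_{u,v} = sup { (x u - x v)^2 / Q(x) : Q(x) > 0 }`. -/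
noncomputable def effRes {V : Type*} [Fintype V] (H : SimpleGraph V) (w : V → V → ℝ)
    (u v : V) : ℝ :=
  sSup {r : ℝ | ∃ x : V → ℝ, 0 < lapQF H w x ∧ r = (x u - x v) ^ 2 / lapQF H w x}



lemma lapQF_nonneg {V : Type*} [Fintype V] (H : SimpleGraph V) (x : V → ℝ) :
    0 ≤ lapQF H (fun _ _ => 1) x := by
  unfold lapQF
  have h : ∀ u ∈ (univ : Finset V), (0:ℝ) ≤ ∑ v : V, if H.Adj u v then 1 * (x u - x v)^2 else 0 := by
    intro u _
    refine Finset.sum_nonneg fun v _ => ?_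
    split <;> positivity
  have := Finset.sum_nonneg h
  linarith

lemma sum_pair_ite {V : Type*} [Fintype V] (p q : V) (f : V → V → ℝ) :
    ∑ a : V, ∑ b : V, (if a = p ∧ b = q then f a b else 0) = f p q := by
  have : ∀ a : V, ∑ b : V, (if a = p ∧ b = q then f a b else 0)
      = if a = p then f a q else 0 := by
    intro a
    by_cases hap : a = p
    · subst hap
      simp only [true_and, if_true]
      exact Finset.sum_ite_eq' univ q (f a) |>.trans (by simp)
    · simp [hap]
  rw [Finset.sum_congr rfl fun a _ => this a]
  exact Finset.sum_ite_eq' univ p (fun a => f a q) |>.trans (by simp)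

lemma lapQF_split {V : Type*} [Fintype V] (G H : SimpleGraph V) (x : V → ℝ) (p q : V)
    (hpq : p ≠ q) (hH : ¬ H.Adj p q)
    (hG : ∀ a b, G.Adj a b ↔ H.Adj a b ∨ (a = p ∧ b = q) ∨ (a = q ∧ b = p)) :
    lapQF G (fun _ _ => 1) x = lapQF H (fun _ _ => 1) x + (x p - x q)^2 := by
  unfold lapQF
  have key : ∀ a b : V, (if G.Adj a b then 1 * (x a - x b)^2 else 0)
      = (if H.Adj a b then 1 * (x a - x b)^2 else 0)
        + ((if a = p ∧ b = q then (x a - x b)^2 else 0)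
        + (if a = q ∧ b = p then (x a - x b)^2 else 0)) := by
    intro a b
    by_cases h1 : H.Adj a b
    · have hnp : ¬ (a = p ∧ b = q) := by rintro ⟨rfl, rfl⟩; exact hH h1
      have hnq : ¬ (a = q ∧ b = p) := by rintro ⟨rfl, rfl⟩; exact hH (h1.symm)
      simp [h1, hnp, hnq, (hG a b).mpr (Or.inl h1)]
    · by_cases h2 : a = p ∧ b = q
      · obtain ⟨rfl, rfl⟩ := h2
        have hg : G.Adj a b := (hG a b).mpr (Or.inr (Or.inl ⟨rfl, rfl⟩))
        simp [hg, h1, hpq, hpq.symm]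
      · by_cases h3 : a = q ∧ b = p
        · obtain ⟨rfl, rfl⟩ := h3
          have hg : G.Adj a b := (hG a b).mpr (Or.inr (Or.inr ⟨rfl, rfl⟩))
          simp [hg, h1, h2]
        · have hg : ¬ G.Adj a b := by
            rw [hG]
            push_neg
            exact ⟨h1, fun ha hb => h2 ⟨ha, hb⟩, fun ha hb => h3 ⟨ha, hb⟩⟩
          simp [hg, h1, h2, h3]
  simp_rw [key, Finset.sum_add_distrib]
  rw [sum_pair_ite p q, sum_pair_ite q p]
  ring_nf

lemma sum_sq_le_lapQF {V : Type*} [Fintype V] {ι : Type*} [Fintype ι]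
    (H : SimpleGraph V) (x : V → ℝ) (f g : ι → V)
    (hadj : ∀ k, H.Adj (f k) (g k))
    (hinj : ∀ k k', s(f k, g k) = s(f k', g k') → k = k') :
    ∑ k : ι, (x (f k) - x (g k))^2 ≤ lapQF H (fun _ _ => 1) x := by
  classical
  unfold lapQF
  rw [← Finset.sum_product']
  set d : V × V → ℝ := fun p => (x p.1 - x p.2)^2 with hd
  set T1 : Finset (V × V) := Finset.univ.image (fun k => (f k, g k)) with hT1
  set T2 : Finset (V × V) := Finset.univ.image (fun k => (g k, f k)) with hT2
  have hne : ∀ k, f k ≠ g k := fun k => (hadj k).ne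
  have hinj1 : Function.Injective (fun k => (f k, g k)) := by
    intro k k' h
    exact hinj k k' (by rw [Prod.mk.injEq] at h; rw [h.1, h.2])
  have hinj2 : Function.Injective (fun k => (g k, f k)) := by
    intro k k' h
    refine hinj k k' ?_
    rw [Prod.mk.injEq] at h
    rw [h.1, h.2]
  have hdisj : Disjoint T1 T2 := by
    rw [Finset.disjoint_left]
    rintro p hp1 hp2
    simp only [hT1, hT2, Finset.mem_image, Finset.mem_univ, true_and] at hp1 hp2
    obtain ⟨k, hk⟩ := hp1
    obtain ⟨k', hk'⟩ := hp2
    rw [← hk'] at hk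
    rw [Prod.mk.injEq] at hk
    have : k = k' := hinj k k' (by rw [hk.1, hk.2, Sym2.eq_swap])
    subst this
    exact hne k hk.1
  -- sum over T1 ∪ T2 of the if-term
  have hsub : T1 ∪ T2 ⊆ Finset.univ ×ˢ Finset.univ := by
    intro p _; simp
  have hnn : ∀ p ∈ Finset.univ ×ˢ Finset.univ, p ∉ T1 ∪ T2 →
      (0:ℝ) ≤ (if H.Adj p.1 p.2 then 1 * (x p.1 - x p.2)^2 else 0) := by
    intro p _ _; split <;> positivity
  have hT : ∑ p ∈ T1 ∪ T2, (if H.Adj p.1 p.2 then 1 * (x p.1 - x p.2)^2 else 0)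
      ≤ ∑ p ∈ Finset.univ ×ˢ Finset.univ, (if H.Adj p.1 p.2 then 1 * (x p.1 - x p.2)^2 else 0) :=
    Finset.sum_le_sum_of_subset_of_nonneg hsub hnn
  have hval : ∑ p ∈ T1 ∪ T2, (if H.Adj p.1 p.2 then 1 * (x p.1 - x p.2)^2 else 0)
      = 2 * ∑ k : ι, (x (f k) - x (g k))^2 := by
    rw [Finset.sum_union hdisj]
    rw [hT1, hT2, Finset.sum_image (fun a _ b _ h => hinj1 h),
      Finset.sum_image (fun a _ b _ h => hinj2 h)]
    have e1 : ∀ k : ι, (if H.Adj (f k) (g k) then 1 * (x (f k) - x (g k))^2 else 0)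
        = (x (f k) - x (g k))^2 := by intro k; simp [hadj k]
    have e2 : ∀ k : ι, (if H.Adj (g k) (f k) then 1 * (x (g k) - x (f k))^2 else 0)
        = (x (f k) - x (g k))^2 := by
      intro k; rw [if_pos (hadj k).symm]; ring
    rw [Finset.sum_congr rfl fun k _ => e1 k, Finset.sum_congr rfl fun k _ => e2 k]
    ring
  linarith [hT, hval ▸ hT]
namespace Stmt11Aux

variable (N L r : ℕ)

def nn : ℕ := N*(L-1) + 2*r + 2

lemma nn_pos : 0 < nn N L r := by unfold nn; omega

def vtx (a : ℕ) : Fin (nn N L r) := ⟨a % nn N L r, Nat.mod_lt _ (nn_pos N L r)⟩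

lemma vtx_val {a : ℕ} (h : a < nn N L r) : (vtx N L r a).val = a := Nat.mod_eq_of_lt h

def cv (j i : ℕ) : Fin (nn N L r) :=
  vtx N L r (if i = 0 then 0 else if L ≤ i then 1 else 2 + j*(L-1) + (i-1))

def pv (t : ℕ) : Fin (nn N L r) := vtx N L r (2 + N*(L-1) + t)

variable {N L r}
variable (hL : 2 ≤ L) (hN : 1 ≤ N)

lemma cv_zero (j : ℕ) : cv N L r j 0 = vtx N L r 0 := by simp [cv]

include hL in
lemma cv_last (j i : ℕ) (h : L ≤ i) : cv N L r j i = vtx N L r 1 := by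
  have : ¬ i = 0 := by omega
  simp [cv, this, h]

include hL in
lemma cv_interior_val (j i : ℕ) (hj : j < N) (h1 : 1 ≤ i) (h2 : i < L) :
    (cv N L r j i).val = 2 + j*(L-1) + (i-1) := by
  have hi0 : ¬ i = 0 := by omega
  have hiL : ¬ L ≤ i := by omega
  rw [cv, if_neg hi0, if_neg hiL]
  apply vtx_val
  unfold nn
  have hj' : j + 1 ≤ N := hj
  have : (j+1)*(L-1) ≤ N*(L-1) := Nat.mul_le_mul_right _ hj'
  have : j*(L-1) + (L-1) ≤ N*(L-1) := by rw [add_mul, one_mul] at this; omega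
  omega

lemma mul_add_inj {d q q' b b' : ℕ} (hb : b < d) (hb' : b' < d)
    (h : q*d + b = q'*d + b') : q = q' ∧ b = b' := by
  have h1 : ∀ p c : ℕ, c < d → (p*d + c)/d = p := by
    intro p c hc
    rw [Nat.add_div_of_dvd_right ⟨p, mul_comm p d⟩, Nat.div_eq_of_lt hc,
      Nat.mul_div_cancel _ (by omega)]
    omega
  have h3 : q = q' := by rw [← h1 q b hb, ← h1 q' b' hb', h]
  refine ⟨h3, by subst h3; omega⟩

include hL in
lemma cv_inj {j j' i i' : ℕ} (hj : j < N) (hj' : j' < N) (hi : i ≤ L) (hi' : i' ≤ L)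
    (h : cv N L r j i = cv N L r j' i') : i = i' ∧ (i = 0 ∨ i = L ∨ j = j') := by
  have hval := congrArg Fin.val h
  have h0 : (vtx N L r 0).val = 0 := vtx_val _ _ _ (by unfold nn; omega)
  have h1 : (vtx N L r 1).val = 1 := vtx_val _ _ _ (by unfold nn; omega)
  rcases Nat.eq_zero_or_pos i with hi0 | hipos
  · subst hi0
    rcases Nat.eq_zero_or_pos i' with hi0' | hipos'
    · subst hi0'; exact ⟨rfl, Or.inl rfl⟩
    · rcases Nat.lt_or_ge i' L with hlt | hge
      · rw [cv_zero, cv_interior_val hL j' i' hj' hipos' hlt] at hval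
        omega
      · rw [cv_zero, cv_last hL j' i' hge] at hval
        omega
  · rcases Nat.lt_or_ge i L with hlt | hge
    · rcases Nat.eq_zero_or_pos i' with hi0' | hipos'
      · subst hi0'
        rw [cv_interior_val hL j i hj hipos hlt, cv_zero] at hval
        omega
      · rcases Nat.lt_or_ge i' L with hlt' | hge'
        · rw [cv_interior_val hL j i hj hipos hlt,
            cv_interior_val hL j' i' hj' hipos' hlt'] at hval
          have : j*(L-1) + (i-1) = j'*(L-1) + (i'-1) := by omega
          have := mul_add_inj (by omega : i-1 < L-1) (by omega : i'-1 < L-1) this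
          exact ⟨by omega, Or.inr (Or.inr this.1)⟩
        · rw [cv_interior_val hL j i hj hipos hlt, cv_last hL j' i' hge'] at hval
          omega
    · rcases Nat.eq_zero_or_pos i' with hi0' | hipos'
      · subst hi0'; rw [cv_last hL j i hge, cv_zero] at hval; omega
      · rcases Nat.lt_or_ge i' L with hlt' | hge'
        · rw [cv_last hL j i hge, cv_interior_val hL j' i' hj' hipos' hlt'] at hval
          omega
        · exact ⟨by omega, Or.inr (Or.inl (by omega))⟩

lemma pv_val (t : ℕ) (ht : t < 2*r) : (pv N L r t).val = 2 + N*(L-1) + t :=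
  vtx_val _ _ _ (by unfold nn; omega)



variable (N L r)

noncomputable def EH : Finset (Sym2 (Fin (nn N L r))) :=
  (Finset.univ.image (fun p : Fin N × Fin L => s(cv N L r p.1 p.2, cv N L r p.1 (p.2+1)))) ∪
  (Finset.univ.image (fun t : Fin r => s(pv N L r (2*t), pv N L r (2*t+1))))

noncomputable def Hg : SimpleGraph (Fin (nn N L r)) := SimpleGraph.fromEdgeSet ↑(EH N L r)

noncomputable def Gg : SimpleGraph (Fin (nn N L r)) :=
  SimpleGraph.fromEdgeSet ↑(insert s(vtx N L r 0, vtx N L r 1) (EH N L r))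

variable {N L r}

lemma mem_EH_iff {e : Sym2 (Fin (nn N L r))} :
    e ∈ EH N L r ↔ (∃ j < N, ∃ i < L, e = s(cv N L r j i, cv N L r j (i+1)))
      ∨ (∃ t < r, e = s(pv N L r (2*t), pv N L r (2*t+1))) := by
  unfold EH
  simp only [Finset.mem_union, Finset.mem_image, Finset.mem_univ, true_and]
  constructor
  · rintro (⟨⟨j, i⟩, h⟩ | ⟨t, h⟩)
    · exact Or.inl ⟨j, j.isLt, i, i.isLt, h.symm⟩
    · exact Or.inr ⟨t, t.isLt, h.symm⟩
  · rintro (⟨j, hj, i, hi, h⟩ | ⟨t, ht, h⟩)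
    · exact Or.inl ⟨(⟨j, hj⟩, ⟨i, hi⟩), h.symm⟩
    · exact Or.inr ⟨⟨t, ht⟩, h.symm⟩

include hL hN

lemma cv_ne (j i : ℕ) (hj : j < N) (hi : i < L) :
    cv N L r j i ≠ cv N L r j (i+1) := by
  intro h
  have := cv_inj hL hj hj (by omega) (by omega) h
  omega

lemma pv_ne (t : ℕ) (ht : t < r) : pv N L r (2*t) ≠ pv N L r (2*t+1) := by
  intro h
  have h1 := pv_val (N:=N) (L:=L) (r:=r) (2*t) (by omega)
  have h2 := pv_val (N:=N) (L:=L) (r:=r) (2*t+1) (by omega)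
  have := congrArg Fin.val h
  omega

-- φ potential
variable (N L r) in
noncomputable def φ : Fin (nn N L r) → ℕ := fun a =>
  if a.val = 0 then 0 else if a.val = 1 then L
  else if a.val < 2 + N*(L-1) then ((a.val - 2) % (L-1)) + 1 else 0

lemma φ_cv (j i : ℕ) (hj : j < N) (hi : i ≤ L) : φ N L r (cv N L r j i) = i := by
  rcases Nat.eq_zero_or_pos i with h0 | hpos
  · subst h0
    rw [cv_zero]
    have : (vtx N L r 0).val = 0 := vtx_val _ _ _ (by unfold nn; omega)
    simp [φ, this]
  · rcases Nat.lt_or_ge i L with hlt | hge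
    · have hv := cv_interior_val (r:=r) hL j i hj hpos hlt
      have h1 : ¬ (cv N L r j i).val = 0 := by omega
      have h2 : ¬ (cv N L r j i).val = 1 := by omega
      have h3 : (cv N L r j i).val < 2 + N*(L-1) := by
        have : (j+1)*(L-1) ≤ N*(L-1) := Nat.mul_le_mul_right _ hj
        rw [add_mul, one_mul] at this
        omega
      rw [φ]
      simp only [h1, h2, h3, if_neg, if_pos, if_false]
      rw [hv]
      have : 2 + j*(L-1) + (i-1) - 2 = j*(L-1) + (i-1) := by omega
      rw [this, Nat.mul_add_mod', Nat.mod_eq_of_lt (by omega)]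
      omega
    · have hiL : i = L := by omega
      rw [hiL, cv_last hL j L le_rfl]
      have hv : (vtx N L r 1).val = 1 := vtx_val _ _ _ (by unfold nn; omega)
      simp [φ, hv]

lemma φ_pv (t : ℕ) (ht : t < 2*r) : φ N L r (pv N L r t) = 0 := by
  have hv := pv_val (N:=N) (L:=L) (r:=r) t ht
  have h1 : ¬ (pv N L r t).val = 0 := by omega
  have h2 : ¬ (pv N L r t).val = 1 := by omega
  have h3 : ¬ (pv N L r t).val < 2 + N*(L-1) := by omega
  simp [φ, h1, h2, h3]

lemma φ_adj {a b : Fin (nn N L r)} (h : (Hg N L r).Adj a b) :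
    φ N L r a ≤ φ N L r b + 1 ∧ φ N L r b ≤ φ N L r a + 1 := by
  rw [Hg, SimpleGraph.fromEdgeSet_adj] at h
  obtain ⟨hmem, -⟩ := h
  rw [Finset.mem_coe, mem_EH_iff] at hmem
  rcases hmem with ⟨j, hj, i, hi, he⟩ | ⟨t, ht, he⟩
  · rw [Sym2.eq_iff] at he
    rcases he with ⟨rfl, rfl⟩ | ⟨rfl, rfl⟩ <;>
      rw [φ_cv hL hN j i hj (by omega), φ_cv hL hN j (i+1) hj (by omega)] <;> omega
  · rw [Sym2.eq_iff] at he
    rcases he with ⟨rfl, rfl⟩ | ⟨rfl, rfl⟩ <;>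
      rw [φ_pv hL hN (2*t) (by omega), φ_pv hL hN (2*t+1) (by omega)] <;> omega

lemma φ_walk {a b : Fin (nn N L r)} (p : (Hg N L r).Walk a b) :
    φ N L r a ≤ φ N L r b + p.length ∧ φ N L r b ≤ φ N L r a + p.length := by
  induction p with
  | nil => simp
  | cons h q ih =>
    have := φ_adj hL hN h
    rw [SimpleGraph.Walk.length_cons]
    omega

lemma reach_aux : ∀ d i : ℕ, i + d = L → (Hg N L r).Reachable (cv N L r 0 i) (cv N L r 0 L) := by
  intro d
  induction d with
  | zero =>
    intro i h
    have hiL : i = L := by omega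
    subst hiL
    exact SimpleGraph.Reachable.refl _
  | succ d ih =>
    intro i h
    have hadj : (Hg N L r).Adj (cv N L r 0 i) (cv N L r 0 (i+1)) := by
      rw [Hg, SimpleGraph.fromEdgeSet_adj]
      refine ⟨?_, cv_ne hL hN 0 i (by omega) (by omega)⟩
      rw [Finset.mem_coe, mem_EH_iff]
      exact Or.inl ⟨0, by omega, i, by omega, rfl⟩
    exact hadj.reachable.trans (ih (i+1) (by omega))

lemma dist_ge : L ≤ (Hg N L r).dist (vtx N L r 0) (vtx N L r 1) := by
  have hreach : (Hg N L r).Reachable (vtx N L r 0) (vtx N L r 1) := by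
    have := reach_aux (r:=r) hL hN L 0 (by omega)
    rwa [cv_zero, cv_last hL 0 L le_rfl] at this
  obtain ⟨p, hp⟩ := hreach.exists_walk_length_eq_dist
  have hw := φ_walk hL hN p
  have h0 : φ N L r (vtx N L r 0) = 0 := by
    rw [← cv_zero (N := N) (L := L) (r := r) 0]; exact φ_cv hL hN 0 0 (by omega) (by omega)
  have h1 : φ N L r (vtx N L r 1) = L := by
    rw [← cv_last (r := r) hL 0 L le_rfl]; exact φ_cv hL hN 0 L (by omega) le_rfl
  rw [h0, h1, hp] at hw
  omega



lemma cv_lt (j i : ℕ) (hj : j < N) (hi : i ≤ L) : (cv N L r j i).val < 2 + N*(L-1) := by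
  rcases Nat.eq_zero_or_pos i with h0 | hpos
  · subst h0
    rw [cv_zero]
    have : (vtx N L r 0).val = 0 := vtx_val _ _ _ (by unfold nn; omega)
    omega
  · rcases Nat.lt_or_ge i L with hlt | hge
    · have hv := cv_interior_val (r:=r) hL j i hj hpos hlt
      have : (j+1)*(L-1) ≤ N*(L-1) := Nat.mul_le_mul_right _ hj
      rw [add_mul, one_mul] at this
      omega
    · rw [cv_last hL j i hge]
      have : (vtx N L r 1).val = 1 := vtx_val _ _ _ (by unfold nn; omega)
      omega

lemma cv_ne_pv (j i t : ℕ) (hj : j < N) (hi : i ≤ L) (ht : t < 2*r) :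
    cv N L r j i ≠ pv N L r t := by
  intro h
  have h1 := cv_lt (r:=r) hL hN j i hj hi
  have h2 := pv_val (N:=N) (L:=L) (r:=r) t ht
  have := congrArg Fin.val h
  omega

lemma edge_inj (j j' i i' : ℕ) (hj : j < N) (hj' : j' < N) (hi : i < L) (hi' : i' < L)
    (h : s(cv N L r j i, cv N L r j (i+1)) = s(cv N L r j' i', cv N L r j' (i'+1))) :
    j = j' ∧ i = i' := by
  rw [Sym2.eq_iff] at h
  rcases h with ⟨h1, h2⟩ | ⟨h1, h2⟩
  · have c1 := cv_inj hL hj hj' (by omega) (by omega) h1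
    have c2 := cv_inj hL hj hj' (by omega) (by omega) h2
    refine ⟨?_, by omega⟩
    rcases c1.2 with h | h | h
    · rcases c2.2 with h' | h' | h'
      · omega
      · omega
      · exact h'
    · omega
    · exact h
  · have c1 := cv_inj hL hj hj' (by omega) (by omega) h1
    have c2 := cv_inj hL hj hj' (by omega) (by omega) h2
    omega

lemma pv_inj (t t' : ℕ) (ht : t < r) (ht' : t' < r)
    (h : s(pv N L r (2*t), pv N L r (2*t+1)) = s(pv N L r (2*t'), pv N L r (2*t'+1))) :
    t = t' := by
  have v1 := pv_val (N:=N) (L:=L) (r:=r) (2*t) (by omega)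
  have v2 := pv_val (N:=N) (L:=L) (r:=r) (2*t+1) (by omega)
  have v3 := pv_val (N:=N) (L:=L) (r:=r) (2*t') (by omega)
  have v4 := pv_val (N:=N) (L:=L) (r:=r) (2*t'+1) (by omega)
  rw [Sym2.eq_iff] at h
  rcases h with ⟨h1, h2⟩ | ⟨h1, h2⟩ <;>
    [skip; skip] <;>
    · have e1 := congrArg Fin.val h1
      have e2 := congrArg Fin.val h2
      omega

lemma top_not_mem : s(vtx N L r 0, vtx N L r 1) ∉ EH N L r := by
  intro hmem
  rw [mem_EH_iff] at hmem
  have h0 : (vtx N L r 0).val = 0 := vtx_val _ _ _ (by unfold nn; omega)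
  have h1 : (vtx N L r 1).val = 1 := vtx_val _ _ _ (by unfold nn; omega)
  rcases hmem with ⟨j, hj, i, hi, he⟩ | ⟨t, ht, he⟩
  · rw [Sym2.eq_iff] at he
    rcases he with ⟨ha, hb⟩ | ⟨ha, hb⟩
    · -- vtx 0 = cv j i, vtx 1 = cv j (i+1)
      rw [← cv_zero (N:=N) (L:=L) (r:=r) j] at ha
      have := cv_inj hL hj hj (by omega) (by omega) ha
      have hi0 : i = 0 := by omega
      subst hi0
      rw [← cv_last (r:=r) hL j L le_rfl] at hb
      have := cv_inj hL hj hj le_rfl (by omega) hb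
      omega
    · rw [← cv_zero (N:=N) (L:=L) (r:=r) j] at ha
      have := cv_inj hL hj hj (by omega) (by omega) ha
      omega
  · rw [Sym2.eq_iff] at he
    have p1 := pv_val (N:=N) (L:=L) (r:=r) (2*t) (by omega)
    have p2 := pv_val (N:=N) (L:=L) (r:=r) (2*t+1) (by omega)
    rcases he with ⟨ha, hb⟩ | ⟨ha, hb⟩ <;>
      · have := congrArg Fin.val ha
        omega

lemma EH_card : (EH N L r).card = N*L + r := by
  unfold EH
  rw [Finset.card_union_of_disjoint, Finset.card_image_of_injective,
    Finset.card_image_of_injective]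
  · simp [Fintype.card_prod]
  · intro t t' h
    exact Fin.ext (pv_inj hL hN t t' t.isLt t'.isLt h)
  · rintro ⟨j, i⟩ ⟨j', i'⟩ h
    have := edge_inj hL hN j j' i i' j.isLt j'.isLt i.isLt i'.isLt h
    ext <;> simp [this.1, this.2]
  · rw [Finset.disjoint_left]
    rintro e he1 he2
    simp only [Finset.mem_image, Finset.mem_univ, true_and] at he1 he2
    obtain ⟨⟨j, i⟩, hji⟩ := he1
    obtain ⟨t, ht⟩ := he2
    rw [← ht] at hji
    rw [Sym2.eq_iff] at hji
    rcases hji with ⟨ha, _⟩ | ⟨ha, _⟩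
    · exact cv_ne_pv hL hN j i (2*t) j.isLt (by omega) (by omega) ha
    · exact cv_ne_pv hL hN j i (2*t+1) j.isLt (by omega) (by omega) ha

lemma EH_no_diag {e : Sym2 (Fin (nn N L r))} (he : e ∈ EH N L r) : ¬ e.IsDiag := by
  rw [mem_EH_iff] at he
  rcases he with ⟨j, hj, i, hi, rfl⟩ | ⟨t, ht, rfl⟩
  · rw [Sym2.mk_isDiag_iff]
    exact cv_ne hL hN j i hj hi
  · rw [Sym2.mk_isDiag_iff]
    exact pv_ne hL hN t ht

lemma u0_ne_v0 : vtx N L r 0 ≠ vtx N L r 1 := by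
  intro h
  have h0 : (vtx N L r 0).val = 0 := vtx_val _ _ _ (by unfold nn; omega)
  have h1 : (vtx N L r 1).val = 1 := vtx_val _ _ _ (by unfold nn; omega)
  have := congrArg Fin.val h
  omega

lemma Gg_edge_count : (Gg N L r).edgeSet.ncard = N*L + r + 1 := by
  rw [Gg, SimpleGraph.edgeSet_fromEdgeSet]
  have hnd : ∀ e ∈ (insert s(vtx N L r 0, vtx N L r 1) (EH N L r)), ¬ e.IsDiag := by
    intro e he
    rcases Finset.mem_insert.mp he with rfl | he
    · rw [Sym2.mk_isDiag_iff]; exact u0_ne_v0 hL hN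
    · exact EH_no_diag hL hN he
  have : (↑(insert s(vtx N L r 0, vtx N L r 1) (EH N L r)) : Set (Sym2 (Fin (nn N L r))))
      \ {e | e.IsDiag} = ↑(insert s(vtx N L r 0, vtx N L r 1) (EH N L r)) := by
    rw [_root_.sdiff_eq_self_iff_disjoint]
    rw [Set.disjoint_left]
    intro e hd he
    exact hnd e (by exact_mod_cast he) hd
  rw [show Sym2.diagSet = {e : Sym2 (Fin (nn N L r)) | e.IsDiag} from rfl]
  rw [this, Set.ncard_coe_finset, Finset.card_insert_of_notMem (top_not_mem hL hN), EH_card hL hN]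

lemma Gg_adj_iff (a b : Fin (nn N L r)) :
    (Gg N L r).Adj a b ↔ (Hg N L r).Adj a b ∨
      (a = vtx N L r 0 ∧ b = vtx N L r 1) ∨ (a = vtx N L r 1 ∧ b = vtx N L r 0) := by
  rw [Gg, Hg, SimpleGraph.fromEdgeSet_adj, SimpleGraph.fromEdgeSet_adj]
  simp only [Finset.coe_insert, Set.mem_insert_iff, Finset.mem_coe]
  constructor
  · rintro ⟨he | he, hne⟩
    · rw [Sym2.eq_iff] at he
      exact Or.inr he
    · exact Or.inl ⟨he, hne⟩
  · rintro (⟨he, hne⟩ | h)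
    · exact ⟨Or.inr he, hne⟩
    · refine ⟨Or.inl ?_, ?_⟩
      · rw [Sym2.eq_iff]; exact h
      · rcases h with ⟨rfl, rfl⟩ | ⟨rfl, rfl⟩
        · exact u0_ne_v0 hL hN
        · exact (u0_ne_v0 hL hN).symm

lemma Hg_not_adj : ¬ (Hg N L r).Adj (vtx N L r 0) (vtx N L r 1) := by
  rw [Hg, SimpleGraph.fromEdgeSet_adj]
  rintro ⟨he, -⟩
  exact top_not_mem hL hN he

lemma Gg_adj : (Gg N L r).Adj (vtx N L r 0) (vtx N L r 1) := by
  rw [Gg_adj_iff hL hN]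
  exact Or.inr (Or.inl ⟨rfl, rfl⟩)

lemma Hg_le_Gg : Hg N L r ≤ Gg N L r := by
  apply SimpleGraph.fromEdgeSet_mono
  intro e he
  simp only [Finset.coe_insert, Set.mem_insert_iff, Finset.mem_coe] at *
  exact Or.inr he


lemma key_CS (x : Fin (nn N L r) → ℝ) :
    (N:ℝ) * (x (vtx N L r 0) - x (vtx N L r 1))^2
      ≤ (L:ℝ) * lapQF (Hg N L r) (fun _ _ => 1) x := by
  have hadj : ∀ p : Fin N × Fin L,
      (Hg N L r).Adj (cv N L r p.1 p.2) (cv N L r p.1 (p.2+1)) := by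
    rintro ⟨j, i⟩
    rw [Hg, SimpleGraph.fromEdgeSet_adj]
    refine ⟨?_, cv_ne hL hN j i j.isLt i.isLt⟩
    rw [Finset.mem_coe, mem_EH_iff]
    exact Or.inl ⟨j, j.isLt, i, i.isLt, rfl⟩
  have hsum : ∑ p : Fin N × Fin L, (x (cv N L r p.1 p.2) - x (cv N L r p.1 (p.2+1)))^2
      ≤ lapQF (Hg N L r) (fun _ _ => 1) x := by
    apply sum_sq_le_lapQF (Hg N L r) x _ _ hadj
    rintro ⟨j, i⟩ ⟨j', i'⟩ h
    have := edge_inj hL hN j j' i i' j.isLt j'.isLt i.isLt i'.isLt h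
    ext <;> simp [this.1, this.2]
  have hpath : ∀ j : ℕ, j < N → (x (vtx N L r 0) - x (vtx N L r 1))^2
      ≤ (L:ℝ) * ∑ i ∈ range L, (x (cv N L r j i) - x (cv N L r j (i+1)))^2 := by
    intro j hj
    have htel : ∑ i ∈ range L, (x (cv N L r j i) - x (cv N L r j (i+1)))
        = x (vtx N L r 0) - x (vtx N L r 1) := by
      rw [Finset.sum_range_sub' (fun i => x (cv N L r j i)) L, cv_zero, cv_last hL j L le_rfl]
    have h := Finset.sum_mul_sq_le_sq_mul_sq (range L)
      (fun i => x (cv N L r j i) - x (cv N L r j (i+1))) (fun _ => 1)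
    simp only [mul_one, one_pow, Finset.sum_const, Finset.card_range, nsmul_eq_mul,
      mul_one] at h
    rw [htel] at h
    calc (x (vtx N L r 0) - x (vtx N L r 1))^2
        ≤ (∑ i ∈ range L, (x (cv N L r j i) - x (cv N L r j (i+1)))^2) * L := h
      _ = (L:ℝ) * ∑ i ∈ range L, (x (cv N L r j i) - x (cv N L r j (i+1)))^2 := by ring
  have hprod : ∑ p : Fin N × Fin L, (x (cv N L r p.1 p.2) - x (cv N L r p.1 (p.2+1)))^2
      = ∑ j : Fin N, ∑ i ∈ range L, (x (cv N L r j i) - x (cv N L r j (i+1)))^2 := by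
    rw [Fintype.sum_prod_type]
    refine Finset.sum_congr rfl fun j _ => ?_
    rw [← Fin.sum_univ_eq_sum_range (fun i => (x (cv N L r j i) - x (cv N L r j (i+1)))^2) L]
  have step : (N:ℝ) * (x (vtx N L r 0) - x (vtx N L r 1))^2
      ≤ (L:ℝ) * ∑ p : Fin N × Fin L, (x (cv N L r p.1 p.2) - x (cv N L r p.1 (p.2+1)))^2 := by
    rw [hprod, Finset.mul_sum]
    calc (N:ℝ) * (x (vtx N L r 0) - x (vtx N L r 1))^2
        = ∑ _j : Fin N, (x (vtx N L r 0) - x (vtx N L r 1))^2 := by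
          rw [Finset.sum_const, Finset.card_univ, Fintype.card_fin, nsmul_eq_mul]
      _ ≤ ∑ j : Fin N, (L:ℝ) * ∑ i ∈ range L, (x (cv N L r j i) - x (cv N L r j (i+1)))^2 :=
          Finset.sum_le_sum fun j _ => hpath j j.isLt
  calc (N:ℝ) * (x (vtx N L r 0) - x (vtx N L r 1))^2
      ≤ (L:ℝ) * ∑ p : Fin N × Fin L, (x (cv N L r p.1 p.2) - x (cv N L r p.1 (p.2+1)))^2 :=
        step
    _ ≤ (L:ℝ) * lapQF (Hg N L r) (fun _ _ => 1) x := by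
        apply mul_le_mul_of_nonneg_left hsum (by positivity)

end Stmt11Aux

/-- tightness of the `sqrt m` bound. For every `eps ∈ (0,1)` there is a
constant `c > 0` such that for all sufficiently large `m` there are an unweighted graph `G`
with exactly `m` edges, a `(1 ± eps)`-spectral sparsifier `H` of `G`, and an edge `{u,v}` of
`G` absent from `H` with `d_{Ĥ}(u,v) ≥ c * sqrt m / (log m)^(3/2)`. -/
theorem stmt11 :
    ∀ eps : ℝ, 0 < eps → eps < 1 →
      ∃ c : ℝ, 0 < c ∧
        ∃ M : ℕ, ∀ m : ℕ, M ≤ m →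
          ∃ (n : ℕ) (G H : SimpleGraph (Fin n)) (w : Fin n → Fin n → ℝ),
            G.edgeSet.ncard = m ∧
            IsSpectralSparsifier G H w eps ∧
            ∃ u v : Fin n, G.Adj u v ∧ ¬ H.Adj u v ∧
              c * Real.sqrt m / (Real.log m) ^ ((3 : ℝ) / 2) ≤ (H.dist u v : ℝ) := by
  intro eps heps0 heps1
  set k : ℕ := ⌈eps⁻¹⌉₊ with hk
  have hk2 : 2 ≤ k := by
    have h1 : (1:ℝ) < eps⁻¹ := by
      rw [lt_inv_comm₀ (by norm_num) heps0]
      simpa using heps1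
    have : 1 < k := Nat.lt_ceil.mpr (by exact_mod_cast h1)
    omega
  have hkinv : ((k:ℝ))⁻¹ ≤ eps := by
    have h1 : eps⁻¹ ≤ (k:ℝ) := Nat.le_ceil _
    rw [inv_le_comm₀ (by positivity) heps0]
    exact h1
  refine ⟨1/(2*k), by positivity, 9*(k+1)^2, ?_⟩
  intro m hm
  set s : ℕ := Nat.sqrt m with hs
  set L : ℕ := s / k with hLdef
  have hsge : 3*(k+1) ≤ s := by
    rw [hs, Nat.le_sqrt]
    calc 3*(k+1) * (3*(k+1)) = 9*(k+1)^2 := by ring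
      _ ≤ m := hm
  have hL : 2 ≤ L := by
    rw [hLdef, Nat.le_div_iff_mul_le (by omega)]
    omega
  have hN : 1 ≤ s := by omega
  have hssq : s * s ≤ m := by
    have := Nat.sqrt_le' m
    rw [hs]
    nlinarith [this]
  have hNL : s * L + 1 ≤ m := by
    have h1 : L ≤ s / 2 := Nat.div_le_div_left hk2 (by omega)
    have h2 : 2 * (s/2) ≤ s := by
      have := Nat.div_mul_le_self s 2
      omega
    have h3 : s * L ≤ s * (s/2) := Nat.mul_le_mul_left _ h1
    have h4 : 2 * (s * (s/2)) ≤ s * s := by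
      calc 2 * (s * (s/2)) = s * (2 * (s/2)) := by ring
        _ ≤ s * s := Nat.mul_le_mul_left _ h2
    have hm81 : 81 ≤ m := by nlinarith [hm, hk2]
    omega
  set r : ℕ := m - 1 - s*L with hrdef
  have hcount : s*L + r + 1 = m := by omega
  refine ⟨Stmt11Aux.nn s L r, Stmt11Aux.Gg s L r, Stmt11Aux.Hg s L r, fun _ _ => 1, ?_, ?_, ?_⟩
  · rw [Stmt11Aux.Gg_edge_count hL hN]
    omega
  · -- spectral sparsifier
    refine ⟨Stmt11Aux.Hg_le_Gg hL hN, fun u v _ => one_pos, fun u v => rfl, ?_⟩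
    intro x
    have hQnn := lapQF_nonneg (Stmt11Aux.Hg s L r) x
    have hsplit := lapQF_split (Stmt11Aux.Gg s L r) (Stmt11Aux.Hg s L r) x
      (Stmt11Aux.vtx s L r 0) (Stmt11Aux.vtx s L r 1)
      (Stmt11Aux.u0_ne_v0 hL hN) (Stmt11Aux.Hg_not_adj hL hN)
      (Stmt11Aux.Gg_adj_iff hL hN)
    have hcs := Stmt11Aux.key_CS hL hN x
    set D : ℝ := (x (Stmt11Aux.vtx s L r 0) - x (Stmt11Aux.vtx s L r 1))^2 with hD
    set Q : ℝ := lapQF (Stmt11Aux.Hg s L r) (fun _ _ => 1) x with hQ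
    have hDnn : 0 ≤ D := sq_nonneg _
    have hLN : (L:ℝ) ≤ eps * s := by
      have h1 : (L:ℝ) ≤ (s:ℝ)/(k:ℝ) := by
        rw [hLdef]
        exact_mod_cast Nat.cast_div_le
      have h3 : (s:ℝ) * (k:ℝ)⁻¹ ≤ (s:ℝ) * eps := by
        apply mul_le_mul_of_nonneg_left hkinv (by positivity)
      calc (L:ℝ) ≤ (s:ℝ) * (k:ℝ)⁻¹ := by rw [← div_eq_mul_inv]; exact h1
        _ ≤ (s:ℝ) * eps := h3
        _ = eps * s := by ring
    have hDle : D ≤ eps * Q := by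
      have hNpos : (0:ℝ) < s := by exact_mod_cast hN
      have h1 : (s:ℝ) * D ≤ (L:ℝ) * Q := hcs
      have h2 : (L:ℝ) * Q ≤ eps * (s:ℝ) * Q := by
        apply mul_le_mul_of_nonneg_right hLN hQnn
      nlinarith
    constructor
    · rw [hsplit]
      nlinarith
    · rw [hsplit]
      nlinarith
  · refine ⟨Stmt11Aux.vtx s L r 0, Stmt11Aux.vtx s L r 1,
      Stmt11Aux.Gg_adj hL hN, Stmt11Aux.Hg_not_adj hL hN, ?_⟩
    have hdist := Stmt11Aux.dist_ge (r:=r) hL hN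
    have hdistR : (L:ℝ) ≤ ((Stmt11Aux.Hg s L r).dist (Stmt11Aux.vtx s L r 0)
        (Stmt11Aux.vtx s L r 1) : ℝ) := by exact_mod_cast hdist
    refine le_trans ?_ hdistR
    have hm81 : (81:ℕ) ≤ m := by nlinarith [hm, hk2]
    have hlog1 : (1:ℝ) ≤ Real.log m := by
      have h3 : (3:ℝ) ≤ (m:ℝ) := by exact_mod_cast le_trans (by norm_num) hm81
      have he : Real.exp 1 ≤ (m:ℝ) := le_trans (le_of_lt (by
        calc Real.exp 1 < 2.7182818286 := Real.exp_one_lt_d9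
          _ < 3 := by norm_num)) h3
      calc (1:ℝ) = Real.log (Real.exp 1) := (Real.log_exp 1).symm
        _ ≤ Real.log m := Real.log_le_log (Real.exp_pos 1) he
    have hpow1 : (1:ℝ) ≤ (Real.log m) ^ ((3:ℝ)/2) :=
      Real.one_le_rpow hlog1 (by norm_num)
    have step1 : 1/(2*(k:ℝ)) * Real.sqrt m / (Real.log m) ^ ((3:ℝ)/2)
        ≤ 1/(2*(k:ℝ)) * Real.sqrt m := by
      apply div_le_self (by positivity) hpow1
    refine le_trans step1 ?_
    -- sqrt m ≤ s + 1 ≤ 2 k L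
    have hsqrt_le : Real.sqrt m ≤ (s:ℝ) + 1 := by
      have h1 : (m:ℝ) ≤ ((s:ℝ)+1)^2 := by
        have h2 : m ≤ (s+1)*(s+1) := by
          have := Nat.lt_succ_sqrt m
          rw [← hs] at this
          simpa [Nat.succ_eq_add_one] using this.le
        have h3 : ((m:ℕ):ℝ) ≤ (((s+1)*(s+1) : ℕ):ℝ) := by exact_mod_cast h2
        push_cast at h3
        nlinarith
      calc Real.sqrt m ≤ Real.sqrt (((s:ℝ)+1)^2) := Real.sqrt_le_sqrt h1
        _ = (s:ℝ)+1 := Real.sqrt_sq (by positivity)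
    have hmod := Nat.div_add_mod s k
    have hmlt : s % k < k := Nat.mod_lt _ (by omega)
    have hkLR : (s:ℝ) ≤ (k:ℝ) * (L:ℝ) + (k:ℝ) - 1 := by
      have h1n : k * L + s % k = s := by rw [hLdef]; exact hmod
      have h1 : (k:ℝ) * (L:ℝ) + ((s % k : ℕ):ℝ) = (s:ℝ) := by exact_mod_cast h1n
      have h2 : ((s % k : ℕ):ℝ) + 1 ≤ (k:ℝ) := by exact_mod_cast hmlt
      linarith
    have hkpos : (0:ℝ) < (k:ℝ) := by exact_mod_cast (by omega : 0 < k)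
    have hLR2 : (2:ℝ) ≤ (L:ℝ) := by exact_mod_cast hL
    have hk_le : (k:ℝ) ≤ (k:ℝ)*(L:ℝ) := le_mul_of_one_le_right hkpos.le (by linarith)
    have hsp1 : (s:ℝ) + 1 ≤ 2*(k:ℝ)*(L:ℝ) := by linarith
    calc 1/(2*(k:ℝ)) * Real.sqrt m ≤ 1/(2*(k:ℝ)) * ((s:ℝ)+1) := by
          apply mul_le_mul_of_nonneg_left hsqrt_le (by positivity)
      _ ≤ 1/(2*(k:ℝ)) * (2*(k:ℝ)*(L:ℝ)) := by
          apply mul_le_mul_of_nonneg_left hsp1 (by positivity)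
      _ = (L:ℝ) := by field_simp
end

section
/- For every eps ∈ (0,1) there exists a constant c > 0 such that for all sufficiently large n there exist a finite simple unweighted graph G=(V,E) on n vertices, a (1±eps)-cut sparsifier H of G, and an edge {u,v} ∈ E with {u,v} ∉ E_H and d_{hat H}(u,v) ≥ c * n / log n. That is, unlike spectral sparsifiers, unweighted versions of cut sparsifiers can have stretch nearly linear in n. -/
open scoped Classical
open Finset

namespace Stmt12aux

/-- vertex `t` on path `j`:  0 = source, L+1 = sink, internal otherwise. -/
def vtx (L j t : ℕ) : ℕ := if t = 0 then 0 else if t = L + 1 then 1 else 2 + j * L + (t - 1)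

/-- layer map. -/
def fl (L a : ℕ) : ℕ := if a = 0 then 0 else if a = 1 then L + 1 else (a - 2) % L + 1

def adjH (K L a b : ℕ) : Prop :=
  ∃ j < K, ∃ t ≤ L, (a = vtx L j t ∧ b = vtx L j (t+1)) ∨ (b = vtx L j t ∧ a = vtx L j (t+1))

lemma fl_vtx (L j t : ℕ) (hL : 1 ≤ L) (ht : t ≤ L + 1) : fl L (vtx L j t) = t := by
  unfold fl vtx
  rcases eq_or_ne t 0 with h0 | h0
  · simp [h0]
  rcases eq_or_ne t (L + 1) with h1 | h1
  · simp [h1]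
  have h2 : 1 ≤ t ∧ t ≤ L := by omega
  have hv : 2 + j * L + (t - 1) = (t - 1) + 2 + j * L := by ring
  rw [if_neg h0, if_neg h1, if_neg (by omega), if_neg (by omega)]
  have : (2 + j * L + (t - 1) - 2) = j * L + (t - 1) := by omega
  rw [this, show j * L + (t - 1) = (t - 1) + j * L from by ring,
    Nat.add_mul_mod_self_right, Nat.mod_eq_of_lt (by omega)]
  omega

lemma adjH_symm {K L a b : ℕ} (h : adjH K L a b) : adjH K L b a := by
  obtain ⟨j, hj, t, ht, h⟩ := h
  exact ⟨j, hj, t, ht, h.symm⟩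

lemma adjH_fl {K L a b : ℕ} (hL : 1 ≤ L) (h : adjH K L a b) :
    fl L a + 1 = fl L b ∨ fl L b + 1 = fl L a := by
  obtain ⟨j, hj, t, ht, h⟩ := h
  rcases h with ⟨ha, hb⟩ | ⟨hb, ha⟩
  · left; rw [ha, hb, fl_vtx L j t hL (by omega), fl_vtx L j (t+1) hL (by omega)]
  · right; rw [ha, hb, fl_vtx L j t hL (by omega), fl_vtx L j (t+1) hL (by omega)]

lemma adjH_irrefl {K L a : ℕ} (hL : 1 ≤ L) (h : adjH K L a a) : False := by
  rcases adjH_fl hL h with h | h <;> omega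

lemma not_adjH_zero_one {K L : ℕ} (hL : 1 ≤ L) : ¬ adjH K L 0 1 := by
  intro h
  obtain ⟨j, hj, t, ht, h⟩ := h
  have h0 : fl L 0 = 0 := by simp [fl]
  have h1 : fl L 1 = L + 1 := by simp [fl]
  rcases h with ⟨ha, hb⟩ | ⟨hb, ha⟩
  · have e1 : t = 0 := by rw [ha] at h0; rw [fl_vtx L j t hL (by omega)] at h0; omega
    have e2 : t + 1 = L + 1 := by rw [hb] at h1; rw [fl_vtx L j (t+1) hL (by omega)] at h1; omega
    omega
  · have e1 : t = L + 1 := by rw [hb] at h1; rw [fl_vtx L j t hL (by omega)] at h1; omega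
    omega

lemma vtx_lt {n K L j t : ℕ} (hL : 1 ≤ L) (hn : 2 + K * L ≤ n) (hj : j < K) (ht : t ≤ L + 1) :
    vtx L j t < n := by
  unfold vtx
  have hKL : 0 < K * L := Nat.mul_pos (by omega) hL
  split_ifs with h0 h1
  · omega
  · omega
  · have : (j + 1) * L ≤ K * L := Nat.mul_le_mul_right _ (by omega)
    have : j * L + L ≤ K * L := by rw [add_one_mul] at this; omega
    omega

lemma vtx_inj_t {L j j' a b : ℕ} (hL : 1 ≤ L) (ha : a ≤ L + 1) (hb : b ≤ L + 1)
    (h : vtx L j a = vtx L j' b) : a = b := by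
  rw [← fl_vtx L j a hL ha, h, fl_vtx L j' b hL hb]

lemma vtx_inj_j {L j j' a : ℕ} (hL : 1 ≤ L) (h1 : 1 ≤ a) (h2 : a ≤ L)
    (h : vtx L j a = vtx L j' a) : j = j' := by
  simp only [vtx, if_neg (show a ≠ 0 by omega), if_neg (show a ≠ L + 1 by omega)] at h
  have : j * L = j' * L := by omega
  exact Nat.eq_of_mul_eq_mul_right (by omega) this

lemma exists_flip {α : Type*} (P : α → Prop) (g : ℕ → α) :
    ∀ m, P (g 0) → ¬ P (g m) → ∃ t < m, P (g t) ∧ ¬ P (g (t+1)) := by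
  intro m
  induction m with
  | zero => intro h0 h1; exact absurd h0 h1
  | succ m ih =>
    intro h0 h1
    by_cases hm : P (g m)
    · exact ⟨m, Nat.lt_succ_self m, hm, h1⟩
    · obtain ⟨t, ht, h⟩ := ih h0 hm
      exact ⟨t, ht.trans (Nat.lt_succ_self m), h⟩

/-- the sparsifier graph: K disjoint paths of length L+1 from vertex 0 to vertex 1. -/
def Hgraph (n K L : ℕ) (hL : 1 ≤ L) : SimpleGraph (Fin n) where
  Adj a b := adjH K L a.val b.val
  symm := ⟨fun a b h => adjH_symm h⟩
  loopless := ⟨fun a h => adjH_irrefl hL h⟩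

/-- the original graph: `Hgraph` plus the edge between 0 and 1. -/
def Ggraph (n K L : ℕ) (hL : 1 ≤ L) : SimpleGraph (Fin n) where
  Adj a b := adjH K L a.val b.val ∨ (a.val = 0 ∧ b.val = 1) ∨ (a.val = 1 ∧ b.val = 0)
  symm := by
    constructor
    rintro a b (h | h | h)
    · exact Or.inl (adjH_symm h)
    · exact Or.inr (Or.inr ⟨h.2, h.1⟩)
    · exact Or.inr (Or.inl ⟨h.2, h.1⟩)
  loopless := by
    constructor
    rintro a (h | h | h)
    · exact adjH_irrefl hL h
    · omega
    · omega

lemma Hgraph_adj {n K L : ℕ} (hL : 1 ≤ L) (a b : Fin n) :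
    (Hgraph n K L hL).Adj a b ↔ adjH K L a.val b.val := Iff.rfl

lemma walk_fl_le {n K L : ℕ} (hL : 1 ≤ L) {a b : Fin n} (p : (Hgraph n K L hL).Walk a b) :
    fl L b.val ≤ fl L a.val + p.length := by
  induction p with
  | nil => simp
  | @cons u v w h q ih =>
    have h2 := adjH_fl hL h
    rw [SimpleGraph.Walk.length_cons]
    omega

lemma cutWeight_one_eq_card {V : Type*} [Fintype V] (H : SimpleGraph V) (S T : Set V) :
    cutWeight H (fun _ _ => 1) S T =
      ((Finset.univ : Finset (V × V)).filter
        (fun p => p.1 ∈ S ∧ p.2 ∈ T ∧ H.Adj p.1 p.2)).card := by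
  unfold cutWeight
  rw [← Fintype.sum_prod_type', Finset.card_filter, Nat.cast_sum]
  apply Finset.sum_congr rfl
  intro p _
  split_ifs <;> simp


lemma cut_lb {n K L : ℕ} (hL : 1 ≤ L) (hK : 0 < K) (hn : 2 + K * L ≤ n)
    (S : Set (Fin n)) (u v : Fin n) (hu0 : u.val = 0) (hv1 : v.val = 1)
    (hu : u ∈ S) (hv : v ∉ S) :
    K ≤ ((Finset.univ : Finset (Fin n × Fin n)).filter
        (fun p => p.1 ∈ S ∧ p.2 ∈ Sᶜ ∧ (Hgraph n K L hL).Adj p.1 p.2)).card := by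
  have hn0 : 0 < n := by omega
  set g : ℕ → ℕ → Fin n := fun j t => ⟨vtx L j t % n, Nat.mod_lt _ hn0⟩ with hg
  have hgval : ∀ j t, j < K → t ≤ L + 1 → (g j t).val = vtx L j t := by
    intro j t hj ht
    exact Nat.mod_eq_of_lt (vtx_lt hL hn hj ht)
  -- flip existence
  have hex : ∀ j : ℕ, ∃ t, j < K → (t ≤ L ∧ g j t ∈ S ∧ g j (t+1) ∉ S) := by
    intro j
    by_cases hj : j < K
    · have h0 : g j 0 = u := by
        apply Fin.ext; rw [hgval j 0 hj (by omega), hu0]; simp [vtx]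
      have h1 : g j (L+1) = v := by
        apply Fin.ext; rw [hgval j (L+1) hj le_rfl, hv1]; simp [vtx]
      have := exists_flip (fun a => a ∈ S) (g j) (L+1) (h0 ▸ hu) (h1 ▸ hv)
      obtain ⟨t, ht, h⟩ := this
      exact ⟨t, fun _ => ⟨by omega, h.1, h.2⟩⟩
    · exact ⟨0, fun h => absurd h hj⟩
  choose t ht using hex
  set F : ℕ → Fin n × Fin n := fun j => (g j (t j), g j (t j + 1)) with hF
  have := Finset.card_le_card_of_injOn F (s := Finset.range K)
    (t := (Finset.univ : Finset (Fin n × Fin n)).filter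
        (fun p => p.1 ∈ S ∧ p.2 ∈ Sᶜ ∧ (Hgraph n K L hL).Adj p.1 p.2)) ?_ ?_
  · simpa using this
  · intro j hj
    rw [Finset.mem_coe, Finset.mem_range] at hj
    obtain ⟨htL, hS1, hS2⟩ := ht j hj
    simp only [Finset.mem_coe, Finset.mem_filter, Finset.mem_univ, true_and]
    refine ⟨hS1, hS2, ?_⟩
    rw [Hgraph_adj, hgval j (t j) hj (by omega), hgval j (t j + 1) hj (by omega)]
    exact ⟨j, hj, t j, htL, Or.inl ⟨rfl, rfl⟩⟩
  · intro j hj j' hj' hFe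
    simp only [Finset.coe_range, Set.mem_Iio] at hj hj'
    obtain ⟨htL, _, _⟩ := ht j hj
    obtain ⟨htL', _, _⟩ := ht j' hj'
    have e1 : vtx L j (t j) = vtx L j' (t j') := by
      have h := congrArg (fun p => (Prod.fst p).val) hFe
      simp only [hF] at h
      rwa [hgval j (t j) hj (by omega),
        hgval j' (t j') hj' (by omega)] at h
    have e2 : vtx L j (t j + 1) = vtx L j' (t j' + 1) := by
      have h := congrArg (fun p => (Prod.snd p).val) hFe
      simp only [hF] at h
      rwa [hgval j (t j + 1) hj (by omega),
        hgval j' (t j' + 1) hj' (by omega)] at h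
    have et : t j = t j' := vtx_inj_t hL (by omega) (by omega) e1
    rcases Nat.eq_zero_or_pos (t j) with h0 | h0
    · rw [← et] at e2
      exact vtx_inj_j hL (by omega) (by omega) e2
    · rw [← et] at e1
      exact vtx_inj_j hL h0 htL e1

lemma cutWeight_one_nonneg {V : Type*} [Fintype V] (H : SimpleGraph V) (S T : Set V) :
    0 ≤ cutWeight H (fun _ _ => 1) S T := by
  rw [cutWeight_one_eq_card]; positivity

lemma cut_split {n K L : ℕ} (hL : 1 ≤ L) (u v : Fin n) (hu0 : u.val = 0) (hv1 : v.val = 1)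
    (S : Set (Fin n)) :
    cutWeight (Ggraph n K L hL) (fun _ _ => 1) S Sᶜ =
      cutWeight (Hgraph n K L hL) (fun _ _ => 1) S Sᶜ
        + (if u ∈ S ∧ v ∈ Sᶜ then 1 else 0) + (if v ∈ S ∧ u ∈ Sᶜ then 1 else 0) := by
  have huv : u ≠ v := fun h => by rw [h, hv1] at hu0; exact one_ne_zero hu0
  have hHuv : ¬ (Hgraph n K L hL).Adj u v := by
    rw [Hgraph_adj, hu0, hv1]; exact not_adjH_zero_one hL
  have hHvu : ¬ (Hgraph n K L hL).Adj v u := fun h => hHuv h.symm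
  have hGH : ∀ a b : Fin n, (Ggraph n K L hL).Adj a b ↔
      (Hgraph n K L hL).Adj a b ∨ (a = u ∧ b = v) ∨ (a = v ∧ b = u) := by
    intro a b
    constructor
    · rintro (h | ⟨h1, h2⟩ | ⟨h1, h2⟩)
      · exact Or.inl h
      · exact Or.inr (Or.inl ⟨Fin.ext (by rw [h1, hu0]), Fin.ext (by rw [h2, hv1])⟩)
      · exact Or.inr (Or.inr ⟨Fin.ext (by rw [h1, hv1]), Fin.ext (by rw [h2, hu0])⟩)
    · rintro (h | ⟨h1, h2⟩ | ⟨h1, h2⟩)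
      · exact Or.inl h
      · exact Or.inr (Or.inl ⟨by rw [h1, hu0], by rw [h2, hv1]⟩)
      · exact Or.inr (Or.inr ⟨by rw [h1, hv1], by rw [h2, hu0]⟩)
  have key : ∀ a b : Fin n,
      (if a ∈ S ∧ b ∈ Sᶜ ∧ (Ggraph n K L hL).Adj a b then (1:ℝ) else 0) =
      (if a ∈ S ∧ b ∈ Sᶜ ∧ (Hgraph n K L hL).Adj a b then (1:ℝ) else 0)
        + (if a = u then (1:ℝ) else 0) *
            (if b = v then (if u ∈ S ∧ v ∈ Sᶜ then (1:ℝ) else 0) else 0)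
        + (if a = v then (1:ℝ) else 0) *
            (if b = u then (if v ∈ S ∧ u ∈ Sᶜ then (1:ℝ) else 0) else 0) := by
    intro a b
    rw [hGH a b]
    by_cases h4 : a = u <;> by_cases h5 : b = v <;> by_cases h6 : a = v <;>
      by_cases h7 : b = u <;>
      by_cases h1 : a ∈ S <;> by_cases h2 : b ∈ Sᶜ <;>
      by_cases h3 : (Hgraph n K L hL).Adj a b <;>
      simp_all <;> tauto
  unfold cutWeight
  simp only [key, Finset.sum_add_distrib, ← Finset.sum_mul_sum]
  rw [Finset.sum_ite_eq' Finset.univ u (fun _ => (1:ℝ)),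
      Finset.sum_ite_eq' Finset.univ v (fun _ => (1:ℝ)),
      Finset.sum_ite_eq' Finset.univ v (fun _ => (if u ∈ S ∧ v ∈ Sᶜ then (1:ℝ) else 0)),
      Finset.sum_ite_eq' Finset.univ u (fun _ => (if v ∈ S ∧ u ∈ Sᶜ then (1:ℝ) else 0))]
  simp
lemma card_swap {V : Type*} [Fintype V] (H : SimpleGraph V) (A B : Set V) :
    ((Finset.univ : Finset (V × V)).filter
        (fun p => p.1 ∈ A ∧ p.2 ∈ B ∧ H.Adj p.1 p.2)).card =
    ((Finset.univ : Finset (V × V)).filter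
        (fun p => p.1 ∈ B ∧ p.2 ∈ A ∧ H.Adj p.1 p.2)).card := by
  apply Finset.card_bij (fun p _ => Prod.swap p)
  · intro p hp
    simp only [Finset.mem_filter, Finset.mem_univ, true_and] at *
    exact ⟨hp.2.1, hp.1, hp.2.2.symm⟩
  · intro p _ q _ h
    exact Prod.swap_injective h
  · intro p hp
    refine ⟨p.swap, ?_, by simp⟩
    simp only [Finset.mem_filter, Finset.mem_univ, true_and] at *
    exact ⟨hp.2.1, hp.1, hp.2.2.symm⟩

lemma card_filter_irrel {α : Type*} (p : α → Prop) (h1 h2 : DecidablePred p) (s : Finset α) :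
    (@Finset.filter α p h1 s).card = (@Finset.filter α p h2 s).card := by
  have : h1 = h2 := Subsingleton.elim h1 h2
  subst this
  rfl

lemma cut_lb_cw {n K L : ℕ} (hL : 1 ≤ L) (hK : 0 < K) (hn : 2 + K * L ≤ n)
    (S : Set (Fin n)) (u v : Fin n) (hu0 : u.val = 0) (hv1 : v.val = 1)
    (hu : u ∈ S) (hv : v ∉ S) :
    (K : ℝ) ≤ cutWeight (Hgraph n K L hL) (fun _ _ => 1) S Sᶜ := by
  rw [cutWeight_one_eq_card]
  have h := cut_lb hL hK hn S u v hu0 hv1 hu hv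
  norm_cast
  exact h.trans (le_of_eq (card_filter_irrel _ _ _ _))

lemma cut_lb_cw' {n K L : ℕ} (hL : 1 ≤ L) (hK : 0 < K) (hn : 2 + K * L ≤ n)
    (S : Set (Fin n)) (u v : Fin n) (hu0 : u.val = 0) (hv1 : v.val = 1)
    (hv : v ∈ S) (hu : u ∉ S) :
    (K : ℝ) ≤ cutWeight (Hgraph n K L hL) (fun _ _ => 1) S Sᶜ := by
  rw [cutWeight_one_eq_card]
  have h := cut_lb hL hK hn Sᶜ u v hu0 hv1 hu (fun hh => hh hv)
  norm_cast
  refine h.trans (le_of_eq ?_)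
  apply Finset.card_bij (fun p _ => Prod.swap p)
  · intro p hp
    simp only [Finset.mem_filter, Finset.mem_univ, true_and, Set.mem_compl_iff,
      compl_compl] at *
    exact ⟨hp.2.1, hp.1, hp.2.2.symm⟩
  · intro p _ q _ h
    exact Prod.swap_injective h
  · intro q hq
    refine ⟨q.swap, ?_, by simp⟩
    simp only [Finset.mem_filter, Finset.mem_univ, true_and, Set.mem_compl_iff,
      compl_compl] at *
    exact ⟨hq.2.1, hq.1, hq.2.2.symm⟩

lemma dist_lb {n K L : ℕ} (hL : 1 ≤ L) (hK : 0 < K) (hn : 2 + K * L ≤ n)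
    (u v : Fin n) (hu0 : u.val = 0) (hv1 : v.val = 1) :
    L + 1 ≤ (Hgraph n K L hL).dist u v := by
  have hn0 : 0 < n := by omega
  have hreach_t : ∀ t, t ≤ L + 1 →
      (Hgraph n K L hL).Reachable u ⟨vtx L 0 t % n, Nat.mod_lt _ hn0⟩ := by
    intro t
    induction t with
    | zero =>
      intro _
      have he : (⟨vtx L 0 0 % n, Nat.mod_lt _ hn0⟩ : Fin n) = u := by
        apply Fin.ext; simp [vtx, hu0]
      rw [he]
    | succ t ih =>
      intro h
      refine (ih (by omega)).trans (SimpleGraph.Adj.reachable ?_)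
      rw [Hgraph_adj]
      show adjH K L (vtx L 0 t % n) (vtx L 0 (t+1) % n)
      rw [Nat.mod_eq_of_lt (vtx_lt hL hn hK (by omega)),
          Nat.mod_eq_of_lt (vtx_lt hL hn hK (by omega))]
      exact ⟨0, hK, t, by omega, Or.inl ⟨rfl, rfl⟩⟩
  have hreach : (Hgraph n K L hL).Reachable u v := by
    have h := hreach_t (L + 1) le_rfl
    have he : (⟨vtx L 0 (L+1) % n, Nat.mod_lt _ hn0⟩ : Fin n) = v := by
      apply Fin.ext
      have : vtx L 0 (L+1) = 1 := by simp [vtx]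
      rw [this, hv1]
      exact Nat.mod_eq_of_lt (by omega)
    rwa [he] at h
  obtain ⟨p, hp⟩ := hreach.exists_walk_length_eq_dist
  have hw := walk_fl_le hL p
  rw [hu0, hv1] at hw
  simp only [fl] at hw
  norm_num at hw
  omega
end Stmt12aux

open Stmt12aux

/-- cut sparsifiers can have nearly linear stretch. For every
`eps ∈ (0,1)` there is a constant `c > 0` such that for all sufficiently large `n` there are
an `n`-vertex unweighted graph `G`, a `(1 ± eps)`-cut sparsifier `H` of `G`, and an edge
`{u,v}` of `G` absent from `H` with `d_{Ĥ}(u,v) ≥ c * n / log n`. -/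
theorem stmt12 :
    ∀ eps : ℝ, 0 < eps → eps < 1 →
      ∃ c : ℝ, 0 < c ∧
        ∃ N : ℕ, ∀ n : ℕ, N ≤ n →
          ∃ (G H : SimpleGraph (Fin n)) (w : Fin n → Fin n → ℝ),
            IsCutSparsifier G H w eps ∧
            ∃ u v : Fin n, G.Adj u v ∧ ¬ H.Adj u v ∧
              c * (n : ℝ) / Real.log n ≤ (H.dist u v : ℝ) := by
  intro eps heps0 heps1
  have hK0 : 0 < ⌈eps⁻¹⌉₊ := Nat.ceil_pos.mpr (by positivity)
  set K := ⌈eps⁻¹⌉₊ with hKdef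
  have hKeps : (1:ℝ) ≤ eps * K := by
    have h := Nat.le_ceil (eps⁻¹)
    have h2 : eps * eps⁻¹ ≤ eps * K := mul_le_mul_of_nonneg_left h heps0.le
    rwa [mul_inv_cancel₀ (ne_of_gt heps0)] at h2
  refine ⟨1 / (2 * (K:ℝ)), by positivity, K + 4, ?_⟩
  intro n hn
  set L := (n - 2) / K with hLdef
  have hL : 1 ≤ L := (Nat.le_div_iff_mul_le hK0).mpr (by omega)
  have hnL : 2 + K * L ≤ n := by
    have h1 : L * K ≤ n - 2 := Nat.div_mul_le_self (n - 2) K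
    have h2 : K * L ≤ n - 2 := by rw [mul_comm]; exact h1
    omega
  have hn0 : 0 < n := by omega
  have hn2 : 2 ≤ n := by omega
  refine ⟨Ggraph n K L hL, Hgraph n K L hL, fun _ _ => 1, ?_,
    ⟨0, by omega⟩, ⟨1, by omega⟩, ?_, ?_, ?_⟩
  · -- IsCutSparsifier
    refine ⟨?_, fun _ _ _ => one_pos, fun _ _ => rfl, ?_⟩
    · intro a b hab
      exact Or.inl hab
    intro S
    have key := cut_split (K := K) hL ⟨0, by omega⟩ ⟨1, by omega⟩ rfl rfl S
    have hm0 := cutWeight_one_nonneg (Hgraph n K L hL) S Sᶜ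
    set m := cutWeight (Hgraph n K L hL) (fun _ _ => 1) S Sᶜ with hm
    by_cases c1 : (⟨0, by omega⟩ : Fin n) ∈ S ∧ (⟨1, by omega⟩ : Fin n) ∈ Sᶜ
    · have hc2 : ¬((⟨1, by omega⟩ : Fin n) ∈ S ∧ (⟨0, by omega⟩ : Fin n) ∈ Sᶜ) :=
        fun h => h.2 c1.1
      rw [key, if_pos c1, if_neg hc2]
      have hmK : (K:ℝ) ≤ m :=
        cut_lb_cw hL hK0 hnL S ⟨0, by omega⟩ ⟨1, by omega⟩ rfl rfl c1.1 c1.2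
      have hem : (1:ℝ) ≤ eps * m := le_trans hKeps (by nlinarith)
      constructor
      · nlinarith
      · nlinarith
    · by_cases c2 : (⟨1, by omega⟩ : Fin n) ∈ S ∧ (⟨0, by omega⟩ : Fin n) ∈ Sᶜ
      · rw [key, if_neg c1, if_pos c2]
        have hmK : (K:ℝ) ≤ m :=
          cut_lb_cw' hL hK0 hnL S ⟨0, by omega⟩ ⟨1, by omega⟩ rfl rfl c2.1 c2.2
        have hem : (1:ℝ) ≤ eps * m := le_trans hKeps (by nlinarith)
        constructor
        · nlinarith
        · nlinarith
      · rw [key, if_neg c1, if_neg c2]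
        constructor
        · nlinarith
        · nlinarith
  · exact Or.inr (Or.inl ⟨rfl, rfl⟩)
  · rw [Hgraph_adj]
    exact not_adjH_zero_one hL
  · -- distance bound
    have hd := dist_lb hL hK0 hnL ⟨0, by omega⟩ ⟨1, by omega⟩ rfl rfl
    have hd' : ((L:ℝ) + 1) ≤
        ((Hgraph n K L hL).dist ⟨0, by omega⟩ ⟨1, by omega⟩ : ℝ) := by
      exact_mod_cast hd
    have hKr : (0:ℝ) < K := by exact_mod_cast hK0
    have hK1r : (1:ℝ) ≤ K := by exact_mod_cast hK0
    have hnr : (K:ℝ) + 4 ≤ n := by exact_mod_cast hn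
    have hn5 : (5:ℝ) ≤ n := by linarith
    have hlog1 : 1 ≤ Real.log n := by
      rw [Real.le_log_iff_exp_le (by linarith)]
      calc Real.exp 1 ≤ 2.7182818286 := Real.exp_one_lt_d9.le
        _ ≤ 5 := by norm_num
        _ ≤ n := hn5
    have step1 : 1 / (2 * (K:ℝ)) * n / Real.log n ≤ 1 / (2 * (K:ℝ)) * n :=
      div_le_self (by positivity) hlog1
    have hmod : n < K * L + K + 2 := by
      have h1 : K * L + (n - 2) % K = n - 2 := by
        rw [hLdef]; exact Nat.div_add_mod (n - 2) K
      have h2 : (n - 2) % K < K := Nat.mod_lt _ hK0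
      omega
    have hmodR : (n:ℝ) < (K:ℝ) * L + K + 2 := by exact_mod_cast hmod
    have step3 : ((n:ℝ) - 2) / K < (L:ℝ) + 1 := by
      rw [div_lt_iff₀ hKr]
      nlinarith
    have step2 : 1 / (2 * (K:ℝ)) * n ≤ ((n:ℝ) - 2) / K := by
      have e : 1 / (2 * (K:ℝ)) * n = n / (2 * K) := by ring
      rw [e, div_le_div_iff₀ (by positivity) hKr]
      nlinarith
    linarith
end

section
/- Let a ≥ 1 and N ≥ 1 be integers and let G=(V,E) be the unweighted graph whose vertex set is the disjoint union V = {u} ∪ V_1 ∪ V_2 ∪ ... ∪ V_N ∪ {v} with |V_i| = a for each 1 ≤ i ≤ N, and whose edge set consists of all pairs with one endpoint in V_i and the other in V_{i+1} for 0 ≤ i ≤ N (where V_0 = {u} and V_{N+1} = {v}), together with the edge {u,v}. Then the effective resistance between u and v satisfies R^G_{u,v} = (2a + N - 1) / (a^2 + 2a + N - 1). -/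
open scoped Classical
open Finset

lemma ite_or_of_not_and {A B : Prop} [Decidable A] [Decidable B] (h : ¬(A ∧ B)) (e : ℝ) :
    (if A ∨ B then e else (0:ℝ)) = (if A then e else 0) + (if B then e else 0) := by
  by_cases hA : A <;> by_cases hB : B
  · exact absurd ⟨hA, hB⟩ h
  · simp [hA, hB]
  · simp [hA, hB]
  · simp [hA, hB]

lemma sum_split_path (N : ℕ) (hN : 1 ≤ N) (f : ℕ → ℝ) :
    ∑ i ∈ Finset.range (N+1), f i = f 0 + (∑ i ∈ Finset.Ico 1 N, f i) + f N := by
  rw [Finset.range_eq_Ico, Finset.sum_eq_sum_Ico_succ_bot (by omega),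
    Finset.sum_Ico_succ_top hN]
  ring

lemma block_lb {V : Type*} [Fintype V] (s t : Finset V) (hs : 0 < s.card) (ht : 0 < t.card)
    (x : V → ℝ) :
    ((s.card : ℝ) * t.card) * ((∑ p ∈ s, x p)/s.card - (∑ q ∈ t, x q)/t.card)^2 ≤
      ∑ p ∈ s, ∑ q ∈ t, (x p - x q)^2 := by
  have hcs : (0:ℝ) < s.card := by exact_mod_cast hs
  have hct : (0:ℝ) < t.card := by exact_mod_cast ht
  have hsum : ∑ p ∈ s, ∑ q ∈ t, (x p - x q) =
      (t.card : ℝ) * (∑ p ∈ s, x p) - (s.card : ℝ) * (∑ q ∈ t, x q) := by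
    have h1 : ∀ p, ∑ q ∈ t, (x p - x q) = (t.card : ℝ) * x p - ∑ q ∈ t, x q := by
      intro p; rw [Finset.sum_sub_distrib, Finset.sum_const, nsmul_eq_mul]
    rw [Finset.sum_congr rfl (fun p _ => h1 p), Finset.sum_sub_distrib, Finset.sum_const,
      ← Finset.mul_sum, nsmul_eq_mul]
  have hCS := sq_sum_le_card_mul_sum_sq (s := s ×ˢ t) (f := fun pq => x pq.1 - x pq.2)
  rw [Finset.sum_product, Finset.card_product, Finset.sum_product, hsum] at hCS
  push_cast at hCS
  have key : ((s.card : ℝ) * t.card) * ((∑ p ∈ s, x p)/s.card - (∑ q ∈ t, x q)/t.card)^2 =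
      ((t.card : ℝ) * (∑ p ∈ s, x p) - (s.card : ℝ) * (∑ q ∈ t, x q))^2 / (s.card * t.card) := by
    field_simp
  rw [key, div_le_iff₀ (by positivity)]
  nlinarith [hCS]

lemma Qdecomp (a N : ℕ) (ha : 1 ≤ a) (hN : 1 ≤ N)
    (V : Type) [Fintype V] (G : SimpleGraph V) (ℓ : V → ℕ) (u v : V)
    (hu : ℓ u = 0) (hv : ℓ v = N + 1)
    (hbound : ∀ z, ℓ z ≤ N + 1)
    (hadj : ∀ x y : V, G.Adj x y ↔
      (((ℓ x : ℤ) - (ℓ y : ℤ)).natAbs = 1 ∨ (x = u ∧ y = v) ∨ (x = v ∧ y = u)))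
    (x : V → ℝ) :
    lapQF G (fun _ _ => 1) x =
      (x u - x v)^2 + ∑ i ∈ Finset.range (N+1), ∑ p ∈ Finset.univ.filter (fun z => ℓ z = i),
        ∑ q ∈ Finset.univ.filter (fun z => ℓ z = i + 1), (x p - x q)^2 := by
  have huv : u ≠ v := fun h => by rw [h, hv] at hu; omega
  have key : ∀ p q : V, (if G.Adj p q then (fun _ _ => (1:ℝ)) p q * (x p - x q)^2 else 0) =
      ((if ℓ q = ℓ p + 1 then (x p - x q)^2 else 0) +
        (if ℓ p = ℓ q + 1 then (x p - x q)^2 else 0)) +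
      ((if p = u ∧ q = v then (x p - x q)^2 else 0) +
        (if p = v ∧ q = u then (x p - x q)^2 else 0)) := by
    intro p q
    have habs : G.Adj p q ↔ ((ℓ q = ℓ p + 1 ∨ ℓ p = ℓ q + 1) ∨ ((p = u ∧ q = v) ∨ (p = v ∧ q = u))) := by
      rw [hadj]
      constructor
      · rintro (h | h | h)
        · left; omega
        · right; left; exact h
        · right; right; exact h
      · rintro ((h | h) | h | h)
        · left; omega
        · left; omega
        · right; left; exact h
        · right; right; exact h
    simp only [habs, one_mul]
    have d1 : ¬((ℓ q = ℓ p + 1 ∨ ℓ p = ℓ q + 1) ∧ ((p = u ∧ q = v) ∨ (p = v ∧ q = u))) := by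
      rintro ⟨h1, h2⟩
      have : (ℓ p = 0 ∧ ℓ q = N+1) ∨ (ℓ p = N+1 ∧ ℓ q = 0) := by
        rcases h2 with ⟨rfl, rfl⟩ | ⟨rfl, rfl⟩
        · exact Or.inl ⟨hu, hv⟩
        · exact Or.inr ⟨hv, hu⟩
      omega
    have d2 : ¬((ℓ q = ℓ p + 1) ∧ (ℓ p = ℓ q + 1)) := by omega
    have d3 : ¬((p = u ∧ q = v) ∧ (p = v ∧ q = u)) := by
      rintro ⟨⟨rfl, rfl⟩, ⟨h3, _⟩⟩
      exact huv h3
    rw [ite_or_of_not_and d1, ite_or_of_not_and d2, ite_or_of_not_and d3]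
  unfold lapQF
  rw [Finset.sum_congr rfl fun p _ => Finset.sum_congr rfl fun q _ => key p q]
  simp only [Finset.sum_add_distrib]
  have hA3 : ∑ p : V, ∑ q : V, (if p = u ∧ q = v then (x p - x q)^2 else 0) = (x u - x v)^2 := by
    simp [ite_and, Finset.sum_ite_eq]
  have hA4 : ∑ p : V, ∑ q : V, (if p = v ∧ q = u then (x p - x q)^2 else 0) = (x v - x u)^2 := by
    simp [ite_and, Finset.sum_ite_eq]
  have hA2 : ∑ p : V, ∑ q : V, (if ℓ p = ℓ q + 1 then (x p - x q)^2 else 0)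
      = ∑ p : V, ∑ q : V, (if ℓ q = ℓ p + 1 then (x p - x q)^2 else 0) := by
    rw [Finset.sum_comm]
    refine Finset.sum_congr rfl fun p _ => Finset.sum_congr rfl fun q _ => ?_
    rw [show (x q - x p)^2 = (x p - x q)^2 by ring]
  have hA1 : ∑ p : V, ∑ q : V, (if ℓ q = ℓ p + 1 then (x p - x q)^2 else 0)
      = ∑ i ∈ Finset.range (N+1), ∑ p ∈ Finset.univ.filter (fun z => ℓ z = i),
        ∑ q ∈ Finset.univ.filter (fun z => ℓ z = i + 1), (x p - x q)^2 := by
    have hmaps : ∀ p ∈ (Finset.univ : Finset V), ℓ p ∈ Finset.range (N+2) :=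
      fun p _ => Finset.mem_range.mpr (by have := hbound p; omega)
    rw [← Finset.sum_fiberwise_of_maps_to hmaps
      (fun p => ∑ q : V, (if ℓ q = ℓ p + 1 then (x p - x q)^2 else 0))]
    rw [Finset.sum_range_succ]
    have hlast : ∑ p ∈ Finset.univ.filter (fun z : V => ℓ z = N + 1),
        ∑ q : V, (if ℓ q = ℓ p + 1 then (x p - x q)^2 else 0) = 0 := by
      refine Finset.sum_eq_zero fun p hp => ?_
      have hp' : ℓ p = N + 1 := (Finset.mem_filter.mp hp).2
      refine Finset.sum_eq_zero fun q _ => ?_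
      rw [if_neg]
      have := hbound q; omega
    rw [hlast, add_zero]
    refine Finset.sum_congr rfl fun i _ => Finset.sum_congr rfl fun p hp => ?_
    have hpi : ℓ p = i := (Finset.mem_filter.mp hp).2
    rw [hpi, ← Finset.sum_filter]
  rw [hA1, hA2, hA3, hA4, ← hA1]
  rw [show (x v - x u)^2 = (x u - x v)^2 by ring]
  ring


set_option maxHeartbeats 2000000 in
/-- Let `G` be the layered graph with layers
`{u} = V_0, V_1, …, V_N, V_{N+1} = {v}` (each middle layer of size `a`), all edges between
consecutive layers, plus the extra edge `{u, v}`. Then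
`R^G_{u,v} = (2a + N - 1) / (a^2 + 2a + N - 1)`. -/
theorem stmt13 (a N : ℕ) (ha : 1 ≤ a) (hN : 1 ≤ N)
    (V : Type) [Fintype V] (G : SimpleGraph V) (ℓ : V → ℕ) (u v : V)
    (hu : ℓ u = 0) (hv : ℓ v = N + 1)
    (hbound : ∀ z, ℓ z ≤ N + 1)
    (hu' : ∀ z, ℓ z = 0 → z = u)
    (hv' : ∀ z, ℓ z = N + 1 → z = v)
    (hsize : ∀ i, 1 ≤ i → i ≤ N → Nat.card {z : V // ℓ z = i} = a)
    (hadj : ∀ x y : V, G.Adj x y ↔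
      (((ℓ x : ℤ) - (ℓ y : ℤ)).natAbs = 1 ∨ (x = u ∧ y = v) ∨ (x = v ∧ y = u))) :
    effRes G (fun _ _ => 1) u v =
      (2 * (a : ℝ) + (N : ℝ) - 1) / ((a : ℝ) ^ 2 + 2 * (a : ℝ) + (N : ℝ) - 1) := by
  classical
  have hA1 : (1:ℝ) ≤ (a:ℝ) := by exact_mod_cast ha
  have hApos : (0:ℝ) < (a:ℝ) := by linarith
  have hNR : (1:ℝ) ≤ (N:ℝ) := by exact_mod_cast hN
  have hDpos : (0:ℝ) < 2*(a:ℝ) + (N:ℝ) - 1 := by linarith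
  set S : ℕ → Finset V := fun i => Finset.univ.filter (fun z => ℓ z = i) with hSdef
  have hS0 : S 0 = {u} := by
    ext z
    simp only [hSdef, Finset.mem_filter, Finset.mem_univ, true_and, Finset.mem_singleton]
    exact ⟨hu' z, fun h => h ▸ hu⟩
  have hSN : S (N+1) = {v} := by
    ext z
    simp only [hSdef, Finset.mem_filter, Finset.mem_univ, true_and, Finset.mem_singleton]
    exact ⟨hv' z, fun h => h ▸ hv⟩
  have hScard : ∀ i, 1 ≤ i → i ≤ N → (S i).card = a := by
    intro i h1 h2
    have := hsize i h1 h2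
    rwa [Nat.card_eq_fintype_card, Fintype.card_subtype] at this
  have hSpos : ∀ i, i ≤ N + 1 → 0 < (S i).card := by
    intro i hi
    rcases Nat.eq_zero_or_pos i with h0 | h0
    · subst h0; rw [hS0]; simp
    · rcases Nat.lt_or_ge i (N+1) with h | h
      · rw [hScard i h0 (by omega)]; omega
      · have hi' : i = N+1 := by omega
        subst hi'; rw [hSN]; simp
  set w : ℕ → ℝ := fun i => ((S i).card : ℝ) * ((S (i+1)).card : ℝ) with hwdef
  have hw0 : w 0 = (a:ℝ) := by
    simp only [hwdef, hS0, Finset.card_singleton]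
    rw [hScard 1 le_rfl hN]; push_cast; ring
  have hwN : w N = (a:ℝ) := by
    simp only [hwdef, hSN, Finset.card_singleton]
    rw [hScard N hN le_rfl]; push_cast; ring
  have hwmid : ∀ i ∈ Finset.Ico 1 N, w i = (a:ℝ)^2 := by
    intro i hi
    rw [Finset.mem_Ico] at hi
    simp only [hwdef]
    rw [hScard i hi.1 (by omega), hScard (i+1) (by omega) (by omega)]
    push_cast; ring
  have hwpos : ∀ i, i ≤ N → 0 < w i := by
    intro i hi
    have h1 := hSpos i (by omega)
    have h2 := hSpos (i+1) (by omega)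
    simp only [hwdef]
    positivity
  have hr : ∑ i ∈ Finset.range (N+1), (w i)⁻¹ = (2*(a:ℝ) + (N:ℝ) - 1) / (a:ℝ)^2 := by
    rw [sum_split_path N hN, hw0, hwN,
      Finset.sum_congr rfl (fun i hi => by rw [hwmid i hi]), Finset.sum_const, Nat.card_Ico]
    rw [nsmul_eq_mul, Nat.cast_sub hN]
    push_cast
    field_simp
    ring
  -- upper bound for every Rayleigh quotient
  have hub : ∀ r ∈ {r : ℝ | ∃ x : V → ℝ, 0 < lapQF G (fun _ _ => 1) x ∧
      r = (x u - x v) ^ 2 / lapQF G (fun _ _ => 1) x},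
      r ≤ (2*(a:ℝ) + (N:ℝ) - 1) / ((a:ℝ)^2 + (2*(a:ℝ) + (N:ℝ) - 1)) := by
    rintro r ⟨x, hQpos, rfl⟩
    have hQ := Qdecomp a N ha hN V G ℓ u v hu hv hbound hadj x
    set m : ℕ → ℝ := fun i => (∑ p ∈ S i, x p) / ((S i).card : ℝ) with hmdef
    have hm0 : m 0 = x u := by simp only [hmdef, hS0]; simp
    have hmN : m (N+1) = x v := by simp only [hmdef, hSN]; simp
    have htel : ∑ i ∈ Finset.range (N+1), (m i - m (i+1)) = x u - x v := by
      rw [Finset.sum_range_sub' m, hm0, hmN]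
    set P : ℝ := ∑ i ∈ Finset.range (N+1), w i * (m i - m (i+1))^2 with hPdef
    have hPnn : 0 ≤ P := by
      rw [hPdef]
      refine Finset.sum_nonneg fun i hi => ?_
      have := hwpos i (by rw [Finset.mem_range] at hi; omega)
      positivity
    have hPleT : P ≤ ∑ i ∈ Finset.range (N+1), ∑ p ∈ S i, ∑ q ∈ S (i+1), (x p - x q)^2 := by
      rw [hPdef]
      refine Finset.sum_le_sum fun i hi => ?_
      rw [Finset.mem_range] at hi
      have hb := block_lb (S i) (S (i+1)) (hSpos i (by omega)) (hSpos (i+1) (by omega)) x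
      simp only [hwdef, hmdef]
      exact hb
    have hQge : (x u - x v)^2 + P ≤ lapQF G (fun _ _ => 1) x := by
      rw [hQ]
      have : ∑ i ∈ Finset.range (N+1), ∑ p ∈ S i, ∑ q ∈ S (i+1), (x p - x q)^2
          = ∑ i ∈ Finset.range (N+1), ∑ p ∈ Finset.univ.filter (fun z => ℓ z = i),
            ∑ q ∈ Finset.univ.filter (fun z => ℓ z = i + 1), (x p - x q)^2 := by
        simp only [hSdef]
      linarith [hPleT, this ▸ hPleT]
    -- Cauchy–Schwarz (Sedrakyan)
    have hCS : (x u - x v)^2 / ((2*(a:ℝ) + (N:ℝ) - 1) / (a:ℝ)^2) ≤ P := by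
      rw [← htel, ← hr, hPdef]
      have key := Finset.sq_sum_div_le_sum_sq_div (Finset.range (N+1))
        (fun i => m i - m (i+1)) (g := fun i => (w i)⁻¹)
        (fun i hi => inv_pos.mpr (hwpos i (by rw [Finset.mem_range] at hi; omega)))
      have e3 : ∑ i ∈ Finset.range (N+1), (m i - m (i+1))^2 / (w i)⁻¹
          = ∑ i ∈ Finset.range (N+1), w i * (m i - m (i+1))^2 := by
        refine Finset.sum_congr rfl fun i hi => ?_
        rw [div_eq_mul_inv, inv_inv]
        ring
      rw [e3] at key
      exact key
    have hrpos : (0:ℝ) < (2*(a:ℝ) + (N:ℝ) - 1) / (a:ℝ)^2 := by positivity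
    have hCS' : (x u - x v)^2 ≤ ((2*(a:ℝ) + (N:ℝ) - 1) / (a:ℝ)^2) * P := by
      rw [div_le_iff₀ hrpos] at hCS
      linarith [hCS]
    have hCS'' : (a:ℝ)^2 * (x u - x v)^2 ≤ (2*(a:ℝ) + (N:ℝ) - 1) * P := by
      have h := mul_le_mul_of_nonneg_left hCS' (le_of_lt (by positivity : (0:ℝ) < (a:ℝ)^2))
      calc (a:ℝ)^2 * (x u - x v)^2 ≤ (a:ℝ)^2 * (((2*(a:ℝ) + (N:ℝ) - 1) / (a:ℝ)^2) * P) := h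
        _ = (2*(a:ℝ) + (N:ℝ) - 1) * P := by field_simp
    set QQ : ℝ := lapQF G (fun _ _ => 1) x with hQQdef
    clear_value QQ
    clear hQ hPleT hCS hCS' htel hm0 hmN hr
    clear_value S w m P
    rw [div_le_div_iff₀ hQpos (by positivity)]
    nlinarith [mul_le_mul_of_nonneg_left hQge hDpos.le, hCS'']
  -- the optimal potential
  set c : ℕ → ℝ := fun i => if i = 0 then 1 else if i = N+1 then 0
      else ((a:ℝ) + (N:ℝ) - (i:ℝ))/(2*(a:ℝ) + (N:ℝ) - 1) with hcdef
  set x0 : V → ℝ := fun z => c (ℓ z) with hx0def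
  have hx0u : x0 u = 1 := by simp only [hx0def, hu, hcdef]; simp
  have hx0v : x0 v = 0 := by
    simp only [hx0def, hv, hcdef]
    simp
  have hT : ∀ i ∈ Finset.range (N+1),
      ∑ p ∈ Finset.univ.filter (fun z => ℓ z = i),
        ∑ q ∈ Finset.univ.filter (fun z => ℓ z = i + 1), (x0 p - x0 q)^2
      = w i * (c i - c (i+1))^2 := by
    intro i _
    have hinner : ∀ p ∈ S i, ∑ q ∈ S (i+1), (x0 p - x0 q)^2
        = ((S (i+1)).card : ℝ) * (c i - c (i+1))^2 := by
      intro p hp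
      have hpi : ℓ p = i := (Finset.mem_filter.mp hp).2
      have : ∀ q ∈ S (i+1), (x0 p - x0 q)^2 = (c i - c (i+1))^2 := by
        intro q hq
        have hqi : ℓ q = i + 1 := (Finset.mem_filter.mp hq).2
        simp only [hx0def, hpi, hqi]
      rw [Finset.sum_congr rfl this, Finset.sum_const, nsmul_eq_mul]
    have : ∑ p ∈ S i, ∑ q ∈ S (i+1), (x0 p - x0 q)^2
        = ((S i).card : ℝ) * (((S (i+1)).card : ℝ) * (c i - c (i+1))^2) := by
      rw [Finset.sum_congr rfl hinner, Finset.sum_const, nsmul_eq_mul]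
    simp only [hSdef] at this
    rw [this]
    simp only [hwdef]
    ring
  have hQ0 : lapQF G (fun _ _ => 1) x0
      = ((a:ℝ)^2 + (2*(a:ℝ) + (N:ℝ) - 1)) / (2*(a:ℝ) + (N:ℝ) - 1) := by
    rw [Qdecomp a N ha hN V G ℓ u v hu hv hbound hadj x0]
    rw [Finset.sum_congr rfl hT, hx0u, hx0v]
    rw [sum_split_path N hN (fun i => w i * (c i - c (i+1))^2)]
    have hc0 : c 0 = 1 := by simp [hcdef]
    have hc1 : c 1 = ((a:ℝ) + (N:ℝ) - 1)/(2*(a:ℝ) + (N:ℝ) - 1) := by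
      simp only [hcdef]
      rw [if_neg (by omega), if_neg (by omega)]
      norm_num
    have hcN : c N = (a:ℝ)/(2*(a:ℝ) + (N:ℝ) - 1) := by
      simp only [hcdef]
      rw [if_neg (by omega), if_neg (by omega)]
      ring_nf
    have hcN1 : c (N+1) = 0 := by
      simp only [hcdef]
      simp
    have hmid : ∀ i ∈ Finset.Ico 1 N, w i * (c i - c (i+1))^2
        = (a:ℝ)^2/(2*(a:ℝ) + (N:ℝ) - 1)^2 := by
      intro i hi
      have hi' := Finset.mem_Ico.mp hi
      have h1 : c i = ((a:ℝ) + (N:ℝ) - (i:ℝ))/(2*(a:ℝ) + (N:ℝ) - 1) := by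
        simp only [hcdef]
        rw [if_neg (by omega), if_neg (by omega)]
      have h2 : c (i+1) = ((a:ℝ) + (N:ℝ) - ((i:ℝ)+1))/(2*(a:ℝ) + (N:ℝ) - 1) := by
        simp only [hcdef]
        rw [if_neg (by omega), if_neg (by omega)]
        push_cast
        ring
      rw [hwmid i hi, h1, h2]
      have hDne : (2*(a:ℝ) + (N:ℝ) - 1) ≠ 0 := ne_of_gt hDpos
      field_simp
      try ring
    rw [Finset.sum_congr rfl hmid, Finset.sum_const, Nat.card_Ico, hw0, hwN,
      hc0, hc1, hcN, hcN1, nsmul_eq_mul, Nat.cast_sub hN]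
    have hDne : (2*(a:ℝ) + (N:ℝ) - 1) ≠ 0 := ne_of_gt hDpos
    push_cast
    field_simp
    have hDne' : (a:ℝ)*2 + (N:ℝ) - 1 ≠ 0 := by linarith
    field_simp
    ring
  have hQ0pos : 0 < lapQF G (fun _ _ => 1) x0 := by
    rw [hQ0]; positivity
  have hmem : (2*(a:ℝ) + (N:ℝ) - 1) / ((a:ℝ)^2 + (2*(a:ℝ) + (N:ℝ) - 1))
      ∈ {r : ℝ | ∃ x : V → ℝ, 0 < lapQF G (fun _ _ => 1) x ∧
        r = (x u - x v) ^ 2 / lapQF G (fun _ _ => 1) x} := by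
    refine ⟨x0, hQ0pos, ?_⟩
    rw [hx0u, hx0v, hQ0]
    have h1 : (2*(a:ℝ) + (N:ℝ) - 1) ≠ 0 := ne_of_gt hDpos
    have h2 : ((a:ℝ)^2 + (2*(a:ℝ) + (N:ℝ) - 1)) ≠ 0 := by positivity
    field_simp
    norm_num
  have hfin : effRes G (fun _ _ => 1) u v
      = (2*(a:ℝ) + (N:ℝ) - 1) / ((a:ℝ)^2 + (2*(a:ℝ) + (N:ℝ) - 1)) := by
    unfold effRes
    exact le_antisymm (csSup_le ⟨_, hmem⟩ hub) (le_csSup ⟨_, hub⟩ hmem)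
  rw [hfin]
  ring_nf
end

section
/- There exists a universal constant C > 0 such that for every integer n ≥ 2 and every real alpha ∈ (0,1) there exists a family P of subsets of {1,...,n} with the following properties: (1) |P| ≤ C * n^{2*alpha} * log n; (2) every member Q ∈ P satisfies |Q| ≤ C * n^{1-alpha} * log n; (3) for every pair i,j ∈ {1,...,n} there is a member Q ∈ P containing both i and j. -/
open scoped Classical
open Finset

/-- There is a universal constant `C > 0` such that for every `n ≥ 2` and
every `alpha ∈ (0,1)` there is a family `P` of subsets of `{1,…,n}` with
`|P| ≤ C * n^(2 alpha) * log n`, every member of size at most `C * n^(1-alpha) * log n`,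
such that every pair of elements is contained in some member of `P`. -/
theorem stmt14 :
    ∃ C : ℝ, 0 < C ∧
      ∀ n : ℕ, 2 ≤ n → ∀ alpha : ℝ, 0 < alpha → alpha < 1 →
        ∃ P : Finset (Finset (Fin n)),
          (P.card : ℝ) ≤ C * (n : ℝ) ^ (2 * alpha) * Real.log n ∧
          (∀ Q ∈ P, (Q.card : ℝ) ≤ C * (n : ℝ) ^ (1 - alpha) * Real.log n) ∧
          ∀ i j : Fin n, ∃ Q ∈ P, i ∈ Q ∧ j ∈ Q := by
  refine ⟨10, by norm_num, ?_⟩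
  intro n hn alpha ha0 ha1
  have hn0 : (0:ℝ) < n := by positivity
  have hn1 : (1:ℝ) ≤ n := by exact_mod_cast Nat.one_le_of_lt hn
  set b : ℕ := ⌈(n : ℝ) ^ (1 - alpha)⌉₊ with hbdef
  have hb0 : 0 < b := Nat.ceil_pos.2 (Real.rpow_pos_of_pos hn0 _)
  set m : ℕ := n / b + 1 with hmdef
  set f : ℕ × ℕ → Finset (Fin n) :=
    fun p => univ.filter (fun i => i.val / b = p.1 ∨ i.val / b = p.2) with hfdef
  -- log n ≥ log 2 > 0.69
  have hlog : (0.69 : ℝ) ≤ Real.log n := by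
    have h2 : Real.log 2 ≤ Real.log n := Real.log_le_log (by norm_num) (by exact_mod_cast hn)
    have := Real.log_two_gt_d9
    linarith
  -- n^alpha ≥ 1 and n^(1-alpha) ≥ 1
  have hpow1 : (1:ℝ) ≤ (n:ℝ) ^ alpha := Real.one_le_rpow hn1 ha0.le
  have hpow2 : (1:ℝ) ≤ (n:ℝ) ^ (1 - alpha) := Real.one_le_rpow hn1 (by linarith)
  -- size of each block
  have hblock : ∀ k : ℕ, (univ.filter (fun i : Fin n => i.val / b = k)).card ≤ b := by
    intro k
    have : (univ.filter (fun i : Fin n => i.val / b = k)).card ≤ (Finset.range b).card := by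
      apply Finset.card_le_card_of_injOn (fun i : Fin n => i.val - k * b)
      · intro i hi
        simp only [mem_coe, mem_filter] at hi
        have hdm := Nat.div_add_mod i.val b
        rw [hi.2, Nat.mul_comm] at hdm
        have hmod := Nat.mod_lt i.val hb0
        simp only [Finset.mem_coe, Finset.mem_range]
        omega
      · intro i hi j hj hij
        simp only [coe_filter, Set.mem_setOf_eq] at hi hj
        have h1 : k * b ≤ i.val := by rw [← hi.2]; exact Nat.div_mul_le_self _ _
        have h2 : k * b ≤ j.val := by rw [← hj.2]; exact Nat.div_mul_le_self _ _
        have hij' : i.val - k * b = j.val - k * b := hij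
        exact Fin.ext (by omega)
    simpa using this
  refine ⟨(Finset.range m ×ˢ Finset.range m).image f, ?_, ?_, ?_⟩
  · -- cardinality bound
    have h1 : ((Finset.range m ×ˢ Finset.range m).image f).card ≤ m * m := by
      calc _ ≤ (Finset.range m ×ˢ Finset.range m).card := Finset.card_image_le
        _ = m * m := by simp
    have hdiv2 : ((n / b : ℕ) : ℝ) ≤ (n:ℝ) ^ alpha := by
      have hdiv : ((n / b : ℕ) : ℝ) ≤ (n:ℝ) / b := Nat.cast_div_le
      have hble : (n:ℝ) ^ (1 - alpha) ≤ b := Nat.le_ceil _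
      have hb0' : (0:ℝ) < (n:ℝ) ^ (1 - alpha) := Real.rpow_pos_of_pos hn0 _
      have h2 : (n:ℝ) / b ≤ (n:ℝ) / (n:ℝ) ^ (1 - alpha) :=
        div_le_div_of_nonneg_left hn0.le hb0' hble
      have heq : (n:ℝ) / (n:ℝ) ^ (1 - alpha) = (n:ℝ) ^ alpha := by
        rw [eq_comm, eq_div_iff hb0'.ne', ← Real.rpow_add hn0]
        have : alpha + (1 - alpha) = 1 := by ring
        rw [this, Real.rpow_one]
      linarith [heq ▸ h2]
    have hmr : (m:ℝ) = ((n / b : ℕ) : ℝ) + 1 := by rw [hmdef]; push_cast; ring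
    have hm : (m : ℝ) ≤ 2 * (n:ℝ) ^ alpha := by rw [hmr]; linarith
    have hsq : ((n:ℝ) ^ alpha) ^ 2 = (n:ℝ) ^ (2 * alpha) := by
      rw [← Real.rpow_natCast ((n:ℝ)^alpha) 2, ← Real.rpow_mul hn0.le]
      norm_num; ring_nf
    have hmnn : (0:ℝ) ≤ (m:ℝ) := Nat.cast_nonneg _
    have h4 : ((m*m : ℕ) : ℝ) ≤ 4 * (n:ℝ) ^ (2*alpha) := by
      rw [Nat.cast_mul]
      nlinarith [hm, hsq, hmnn]
    have hpow3 : (1:ℝ) ≤ (n:ℝ) ^ (2*alpha) := Real.one_le_rpow hn1 (by linarith)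
    calc (((Finset.range m ×ˢ Finset.range m).image f).card : ℝ) ≤ ((m*m : ℕ):ℝ) := by
            exact_mod_cast h1
      _ ≤ 4 * (n:ℝ) ^ (2*alpha) := h4
      _ ≤ 10 * (n:ℝ) ^ (2*alpha) * Real.log n := by nlinarith
  · -- member size bound
    intro Q hQ
    simp only [Finset.mem_image] at hQ
    obtain ⟨p, hp, rfl⟩ := hQ
    have hcard : (f p).card ≤ 2 * b := by
      have : f p ⊆ univ.filter (fun i : Fin n => i.val / b = p.1) ∪
                   univ.filter (fun i : Fin n => i.val / b = p.2) := by
        intro i hi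
        simp only [hfdef, mem_filter, mem_union] at hi ⊢
        tauto
      calc (f p).card ≤ _ := Finset.card_le_card this
        _ ≤ _ + _ := Finset.card_union_le _ _
        _ ≤ 2 * b := by have := hblock p.1; have := hblock p.2; omega
    have hble : (b:ℝ) ≤ (n:ℝ) ^ (1 - alpha) + 1 := (Nat.ceil_lt_add_one (by positivity)).le
    calc ((f p).card : ℝ) ≤ ((2*b : ℕ):ℝ) := by exact_mod_cast hcard
      _ ≤ 4 * (n:ℝ) ^ (1 - alpha) := by push_cast; nlinarith
      _ ≤ 10 * (n:ℝ) ^ (1 - alpha) * Real.log n := by nlinarith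
  · -- coverage
    intro i j
    refine ⟨f (i.val / b, j.val / b), ?_, ?_, ?_⟩
    · apply Finset.mem_image_of_mem
      simp only [Finset.mem_product, Finset.mem_range, hmdef]
      have h1 : i.val / b ≤ n / b := Nat.div_le_div_right i.is_lt.le
      have h2 : j.val / b ≤ n / b := Nat.div_le_div_right j.is_lt.le
      omega
    · simp [hfdef]
    · simp [hfdef]
end

section
/- Let H=(V,E_H,w) be a weighted graph on a finite vertex set V with every edge weight at least 1, with E_H nonempty, and total edge weight W = sum of w(e) over e ∈ E_H. Let phi ∈ (0,1). Then there exists a partition of V into nonempty clusters C_1, ..., C_t such that: (1) for every j, any two vertices of C_j are joined by a path of at most 2 * ln(2W) / ln(1+phi) edges within the induced unweighted subgraph hat{H}[C_j]; and (2) the total weight of H-edges whose endpoints lie in different clusters is at most 2 * phi * W. -/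
open scoped Classical
open Finset

/-- Total edge weight of a weighted graph (each edge counted once). -/
noncomputable def totalWeight {V : Type*} [Fintype V] (H : SimpleGraph V)
    (w : V → V → ℝ) : ℝ :=
  (1 / 2) * ∑ u : V, ∑ v : V, if H.Adj u v then w u v else 0

section Helpers

variable {V : Type} [Fintype V] (H : SimpleGraph V) (w : V → V → ℝ)

noncomputable def wIn (S : Finset V) : ℝ :=
  (1 / 2) * ∑ u : V, ∑ v : V, if u ∈ S ∧ v ∈ S ∧ H.Adj u v then w u v else 0

noncomputable def cutF (S U : Finset V) : ℝ :=
  ∑ u : V, ∑ v : V, if u ∈ S ∧ v ∈ U ∧ v ∉ S ∧ H.Adj u v then w u v else 0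

noncomputable def bad (U : Finset V) (P : Finset (Finset V)) : ℝ :=
  (1 / 2) * ∑ u : V, ∑ v : V,
    if u ∈ U ∧ v ∈ U ∧ H.Adj u v ∧ ∀ C ∈ P, ¬ (u ∈ C ∧ v ∈ C) then w u v else 0

noncomputable def ball (U : Finset V) (v : V) : ℕ → Finset V
  | 0 => {v}
  | (r+1) => ball U v r ∪ U.filter (fun u => ∃ x ∈ ball U v r, H.Adj x u)

variable {H w}

variable (hw0 : ∀ u v, H.Adj u v → 0 ≤ w u v) (hsym : ∀ u v, w u v = w v u)

include hw0 in
lemma wIn_nonneg (S : Finset V) : 0 ≤ wIn H w S := by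
  unfold wIn
  apply mul_nonneg (by norm_num)
  refine Finset.sum_nonneg fun u _ => Finset.sum_nonneg fun v _ => ?_
  split_ifs with h
  · exact hw0 _ _ h.2.2
  · exact le_refl 0

include hw0 in
lemma cutF_nonneg (S U : Finset V) : 0 ≤ cutF H w S U := by
  unfold cutF
  refine Finset.sum_nonneg fun u _ => Finset.sum_nonneg fun v _ => ?_
  split_ifs with h
  · exact hw0 _ _ h.2.2.2
  · exact le_refl 0

include hw0 in
lemma wIn_le_total (S : Finset V) : wIn H w S ≤ totalWeight H w := by
  unfold wIn totalWeight
  apply mul_le_mul_of_nonneg_left _ (by norm_num)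
  refine Finset.sum_le_sum fun u _ => Finset.sum_le_sum fun v _ => ?_
  split_ifs with h1 h2 h3
  · exact le_refl _
  · exact absurd h1.2.2 h2
  · exact hw0 _ _ h3
  · exact le_refl 0

include hw0 in
lemma wIn_superadd {C U : Finset V} (hCU : C ⊆ U) :
    wIn H w C + wIn H w (U \ C) ≤ wIn H w U := by
  unfold wIn
  rw [← mul_add]
  apply mul_le_mul_of_nonneg_left _ (by norm_num : (0:ℝ) ≤ 1/2)
  rw [← Finset.sum_add_distrib]
  refine Finset.sum_le_sum fun u _ => ?_
  rw [← Finset.sum_add_distrib]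
  refine Finset.sum_le_sum fun v _ => ?_
  by_cases h1 : u ∈ C ∧ v ∈ C ∧ H.Adj u v
  · have h2 : ¬(u ∈ U \ C ∧ v ∈ U \ C ∧ H.Adj u v) :=
      fun h => (Finset.mem_sdiff.1 h.1).2 h1.1
    have hc : u ∈ U ∧ v ∈ U ∧ H.Adj u v := ⟨hCU h1.1, hCU h1.2.1, h1.2.2⟩
    simp [h1, h2, hc]
  · by_cases h2 : u ∈ U \ C ∧ v ∈ U \ C ∧ H.Adj u v
    · have hc : u ∈ U ∧ v ∈ U ∧ H.Adj u v :=
        ⟨(Finset.mem_sdiff.1 h2.1).1, (Finset.mem_sdiff.1 h2.2.1).1, h2.2.2⟩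
      have hu : u ∉ C := (Finset.mem_sdiff.1 h2.1).2
      simp [h1, h2, hc, hu]
    · simp only [h1, h2, if_false, add_zero]
      split_ifs with h3
      · exact hw0 _ _ h3.2.2
      · exact le_refl 0

include hsym in
lemma cut_swap (S U : Finset V) :
    (∑ u : V, ∑ v : V, if v ∈ S ∧ u ∈ U ∧ u ∉ S ∧ H.Adj u v then w u v else 0)
      = cutF H w S U := by
  rw [Finset.sum_comm]
  unfold cutF
  refine Finset.sum_congr rfl fun x _ => Finset.sum_congr rfl fun y _ => ?_
  rw [hsym y x, H.adj_comm y x]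

-- ball lemmas
lemma ball_subset_succ (U : Finset V) (v : V) (r : ℕ) :
    ball H U v r ⊆ ball H U v (r+1) := Finset.subset_union_left

lemma mem_ball_self (U : Finset V) (v : V) (r : ℕ) : v ∈ ball H U v r := by
  induction r with
  | zero => simp [ball]
  | succ r ih => exact ball_subset_succ U v r ih

lemma ball_subset_U {U : Finset V} {v : V} (hv : v ∈ U) (r : ℕ) :
    ball H U v r ⊆ U := by
  induction r with
  | zero => simpa [ball] using hv
  | succ r ih =>
      intro x hx
      rcases Finset.mem_union.1 hx with h | h
      · exact ih h
      · exact (Finset.mem_filter.1 h).1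

include hw0 hsym in
lemma grow (U : Finset V) (v : V) (r : ℕ) :
    wIn H w (ball H U v r) + cutF H w (ball H U v r) U ≤ wIn H w (ball H U v (r+1)) := by
  set B := ball H U v r with hB
  set B' := ball H U v (r+1) with hB'
  have hpt : ∀ u x : V,
      ((if u ∈ B ∧ x ∈ B ∧ H.Adj u x then w u x else 0)
        + (if u ∈ B ∧ x ∈ U ∧ x ∉ B ∧ H.Adj u x then w u x else 0))
        + (if x ∈ B ∧ u ∈ U ∧ u ∉ B ∧ H.Adj u x then w u x else 0)
        ≤ (if u ∈ B' ∧ x ∈ B' ∧ H.Adj u x then w u x else 0) := by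
    intro u x
    have hsub : B ⊆ B' := ball_subset_succ U v r
    by_cases c1 : u ∈ B ∧ x ∈ B ∧ H.Adj u x
    · have c2 : ¬(u ∈ B ∧ x ∈ U ∧ x ∉ B ∧ H.Adj u x) := fun h => h.2.2.1 c1.2.1
      have c3 : ¬(x ∈ B ∧ u ∈ U ∧ u ∉ B ∧ H.Adj u x) := fun h => h.2.2.1 c1.1
      have ct : u ∈ B' ∧ x ∈ B' ∧ H.Adj u x := ⟨hsub c1.1, hsub c1.2.1, c1.2.2⟩
      simp [c1, c2, c3, ct]
    · by_cases c2 : u ∈ B ∧ x ∈ U ∧ x ∉ B ∧ H.Adj u x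
      · have c3 : ¬(x ∈ B ∧ u ∈ U ∧ u ∉ B ∧ H.Adj u x) := fun h => h.2.2.1 c2.1
        have hx' : x ∈ B' := by
          rw [hB']
          show x ∈ ball H U v (r+1)
          refine Finset.mem_union.2 (Or.inr (Finset.mem_filter.2 ⟨c2.2.1, ⟨u, c2.1, c2.2.2.2⟩⟩))
        have ct : u ∈ B' ∧ x ∈ B' ∧ H.Adj u x := ⟨hsub c2.1, hx', c2.2.2.2⟩
        simp [c1, c2, c3, ct]
      · by_cases c3 : x ∈ B ∧ u ∈ U ∧ u ∉ B ∧ H.Adj u x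
        · have hu' : u ∈ B' := by
            rw [hB']
            show u ∈ ball H U v (r+1)
            refine Finset.mem_union.2 (Or.inr
              (Finset.mem_filter.2 ⟨c3.2.1, ⟨x, c3.1, (H.adj_comm u x).1 c3.2.2.2⟩⟩))
          have ct : u ∈ B' ∧ x ∈ B' ∧ H.Adj u x := ⟨hu', hsub c3.1, c3.2.2.2⟩
          simp [c1, c2, c3, ct]
        · simp only [c1, c2, c3, if_false, add_zero]
          split_ifs with h3
          · exact hw0 _ _ h3.2.2
          · exact le_refl 0
  have hsum : (∑ u : V, ∑ x : V, if u ∈ B ∧ x ∈ B ∧ H.Adj u x then w u x else 0)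
      + (∑ u : V, ∑ x : V, if u ∈ B ∧ x ∈ U ∧ x ∉ B ∧ H.Adj u x then w u x else 0)
      + (∑ u : V, ∑ x : V, if x ∈ B ∧ u ∈ U ∧ u ∉ B ∧ H.Adj u x then w u x else 0)
      ≤ ∑ u : V, ∑ x : V, if u ∈ B' ∧ x ∈ B' ∧ H.Adj u x then w u x else 0 := by
    rw [← Finset.sum_add_distrib, ← Finset.sum_add_distrib]
    refine Finset.sum_le_sum fun u _ => ?_
    rw [← Finset.sum_add_distrib, ← Finset.sum_add_distrib]
    exact Finset.sum_le_sum fun x _ => hpt u x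
  have hswap := cut_swap (H := H) hsym B U
  have hc : cutF H w B U = ∑ u : V, ∑ x : V,
      if u ∈ B ∧ x ∈ U ∧ x ∉ B ∧ H.Adj u x then w u x else 0 := rfl
  have e1 : wIn H w B = (1 / 2) * ∑ u : V, ∑ x : V,
      if u ∈ B ∧ x ∈ B ∧ H.Adj u x then w u x else 0 := rfl
  have e2 : wIn H w B' = (1 / 2) * ∑ u : V, ∑ x : V,
      if u ∈ B' ∧ x ∈ B' ∧ H.Adj u x then w u x else 0 := rfl
  linarith [hsum, hswap, hc, e1, e2]

omit hw0 hsym in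
lemma double_sum_ge_one {f : V → V → ℝ}
    (hf : ∀ u v, f u v = 0 ∨ 1 ≤ f u v)
    (h : 0 < ∑ u : V, ∑ v : V, f u v) : 1 ≤ ∑ u : V, ∑ v : V, f u v := by
  have hnn : ∀ u v, 0 ≤ f u v := fun u v => by
    rcases hf u v with h' | h' <;> linarith
  have hex : ∃ u ∈ Finset.univ (α := V), 0 < ∑ v : V, f u v := by
    by_contra hc
    push_neg at hc
    have : ∑ u : V, ∑ v : V, f u v ≤ 0 :=
      Finset.sum_nonpos fun u hu => hc u hu
    linarith
  obtain ⟨u, _, hu⟩ := hex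
  have hex2 : ∃ v ∈ Finset.univ (α := V), 0 < f u v := by
    by_contra hc
    push_neg at hc
    have : ∑ v : V, f u v ≤ 0 := Finset.sum_nonpos fun v hv => hc v hv
    linarith
  obtain ⟨x, _, hx⟩ := hex2
  have h1 : 1 ≤ f u x := by
    rcases hf u x with h' | h' <;> linarith
  have h2 : f u x ≤ ∑ v : V, f u v :=
    Finset.single_le_sum (fun v _ => hnn u v) (Finset.mem_univ x)
  have h3 : ∑ v : V, f u v ≤ ∑ u : V, ∑ v : V, f u v :=
    Finset.single_le_sum (fun u' _ => Finset.sum_nonneg fun v _ => hnn u' v)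
      (Finset.mem_univ u)
  linarith

variable (hw1 : ∀ u v, H.Adj u v → 1 ≤ w u v)

include hw1 in
lemma cutF_ge_one {S U : Finset V} (h : 0 < cutF H w S U) : 1 ≤ cutF H w S U := by
  unfold cutF at h ⊢
  refine double_sum_ge_one (fun u v => ?_) h
  split_ifs with hc
  · exact Or.inr (hw1 u v hc.2.2.2)
  · exact Or.inl rfl

-- walk lemma
lemma walk_of_mem_ball {U : Finset V} {v : V} {C : Finset V} (hvC : v ∈ C) :
    ∀ r (hsub : ball H U v r ⊆ C), ∀ u (hu : u ∈ ball H U v r),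
      ∃ p : (H.induce (C : Set V)).Walk ⟨v, hvC⟩ ⟨u, hsub hu⟩,
        p.length ≤ r := by
  intro r
  induction r with
  | zero =>
      intro hsub u hu
      have : u = v := by simpa [ball] using hu
      subst this
      exact ⟨SimpleGraph.Walk.nil, by simp⟩
  | succ r ih =>
      intro hsub u hu
      have hsub' : ball H U v r ⊆ C := fun x hx => hsub (ball_subset_succ U v r hx)
      rcases Finset.mem_union.1 hu with h | h
      · obtain ⟨p, hp⟩ := ih hsub' u h
        exact ⟨p, le_trans hp (Nat.le_succ r)⟩
      · obtain ⟨hU, x, hxB, hadj⟩ := by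
          simpa using Finset.mem_filter.1 h
        obtain ⟨p, hp⟩ := ih hsub' x hxB
        have hadj' : (H.induce (C : Set V)).Adj ⟨x, hsub' hxB⟩ ⟨u, hsub hu⟩ := hadj
        refine ⟨p.concat hadj', ?_⟩
        rw [SimpleGraph.Walk.length_concat]
        omega

-- stabilization
lemma ball_stabilizes (U : Finset V) (v : V) :
    ∃ r, ball H U v r = ball H U v (r+1) := by
  by_contra hc
  push_neg at hc
  have hgrow : ∀ r : ℕ, r + 1 ≤ (ball H U v r).card := by
    intro r
    induction r with
    | zero => simp [ball]
    | succ r ih =>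
        have hss : ball H U v r ⊂ ball H U v (r+1) :=
          Finset.ssubset_iff_subset_ne.2 ⟨ball_subset_succ U v r, hc r⟩
        have := Finset.card_lt_card hss
        omega
  have h1 := hgrow (Fintype.card V)
  have h2 := Finset.card_le_univ (ball H U v (Fintype.card V))
  omega

include hw0 hsym hw1 in
lemma cluster (phi : ℝ) (hphi0 : 0 < phi) (hphi1 : phi < 1)
    (hW1 : (1:ℝ) ≤ 2 * totalWeight H w)
    (U : Finset V) (v : V) (hv : v ∈ U) :
    ∃ C : Finset V, v ∈ C ∧ C ⊆ U ∧
      (∀ x y (hx : x ∈ C) (hy : y ∈ C),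
        ∃ p : (H.induce (C : Set V)).Walk ⟨x, hx⟩ ⟨y, hy⟩,
          (p.length : ℝ) ≤ 2 * Real.log (2 * totalWeight H w) / Real.log (1 + phi)) ∧
      cutF H w C U ≤ phi * wIn H w C := by
  set W := totalWeight H w with hWdef
  -- existence of a stopping radius
  have hex : ∃ r, cutF H w (ball H U v r) U ≤ phi * wIn H w (ball H U v r) := by
    obtain ⟨r, hr⟩ := ball_stabilizes (H := H) U v
    refine ⟨r, ?_⟩
    have hcut0 : cutF H w (ball H U v r) U = 0 := by
      unfold cutF
      refine Finset.sum_eq_zero fun u _ => Finset.sum_eq_zero fun x _ => ?_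
      split_ifs with hcond
      · exfalso
        apply hcond.2.2.1
        rw [hr]
        exact Finset.mem_union.2 (Or.inr
          (Finset.mem_filter.2 ⟨hcond.2.1, ⟨u, hcond.1, hcond.2.2.2⟩⟩))
      · rfl
    rw [hcut0]
    exact mul_nonneg (le_of_lt hphi0) (wIn_nonneg hw0 _)
  set R := Nat.find hex with hRdef
  have hstop : cutF H w (ball H U v R) U ≤ phi * wIn H w (ball H U v R) :=
    Nat.find_spec hex
  have hmin : ∀ r < R, phi * wIn H w (ball H U v r) < cutF H w (ball H U v r) U := by
    intro r hr
    have := Nat.find_min hex hr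
    push_neg at this
    exact this
  set C := ball H U v R with hCdef
  have hvC : v ∈ C := mem_ball_self U v R
  have hCU : C ⊆ U := ball_subset_U hv R
  -- growth estimates
  have hgrow' : ∀ r, r < R →
      (1 + phi) * wIn H w (ball H U v r) ≤ wIn H w (ball H U v (r+1)) := by
    intro r hr
    have h1 := grow hw0 hsym U v r
    have h2 := hmin r hr
    nlinarith [wIn_nonneg hw0 (ball H U v r)]
  have hpow : ∀ k, k + 1 ≤ R → (1 + phi) ^ k ≤ wIn H w (ball H U v (k+1)) := by
    intro k
    induction k with
    | zero =>
        intro hk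
        have h1 := grow hw0 hsym U v 0
        have h2 := hmin 0 hk
        have h3 : 0 < cutF H w (ball H U v 0) U := by
          have := wIn_nonneg hw0 (H := H) (w := w) (ball H U v 0)
          nlinarith
        have h4 := cutF_ge_one hw1 h3
        have := wIn_nonneg hw0 (H := H) (w := w) (ball H U v 0)
        simpa using by linarith
    | succ k ih =>
        intro hk
        have h1 : k + 1 ≤ R := by omega
        have h2 := ih h1
        have h3 := hgrow' (k+1) (by omega)
        calc (1 + phi) ^ (k+1) = (1 + phi) * (1 + phi) ^ k := by ring
        _ ≤ (1 + phi) * wIn H w (ball H U v (k+1)) := by nlinarith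
        _ ≤ wIn H w (ball H U v (k+2)) := h3
  -- bound on R
  have hlogphi : 0 < Real.log (1 + phi) := Real.log_pos (by linarith)
  have hW0 : 0 < W := by rw [hWdef]; linarith [hW1]
  have hRbound : (R : ℝ) ≤ Real.log (2 * W) / Real.log (1 + phi) := by
    rcases Nat.eq_zero_or_pos R with h0 | hpos
    · rw [h0]
      push_cast
      exact div_nonneg (Real.log_nonneg (by linarith)) (le_of_lt hlogphi)
    · obtain ⟨k, hk⟩ : ∃ k, R = k + 1 := ⟨R - 1, by omega⟩
      have h2 : (1 + phi) ^ k ≤ W :=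
        le_trans (hpow k (by omega)) (wIn_le_total hw0 _)
      have h3 : (k : ℝ) * Real.log (1 + phi) ≤ Real.log W := by
        have := Real.log_le_log (pow_pos (by linarith : (0:ℝ) < 1 + phi) k) h2
        rwa [Real.log_pow] at this
      have h4 : Real.log (1 + phi) ≤ Real.log 2 :=
        Real.log_le_log (by linarith) (by linarith)
      have h5 : Real.log (2 * W) = Real.log 2 + Real.log W :=
        Real.log_mul (by norm_num) (ne_of_gt hW0)
      rw [le_div_iff₀ hlogphi, h5, hk]
      push_cast
      nlinarith
  -- assemble
  refine ⟨C, hvC, hCU, ?_, hstop⟩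
  intro x y hx hy
  obtain ⟨px, hpx⟩ := walk_of_mem_ball (H := H) hvC R (le_refl _ : C ⊆ C) x hx
  obtain ⟨py, hpy⟩ := walk_of_mem_ball (H := H) hvC R (le_refl _ : C ⊆ C) y hy
  refine ⟨px.reverse.append py, ?_⟩
  have hlen : (px.reverse.append py).length = px.length + py.length := by
    rw [SimpleGraph.Walk.length_append, SimpleGraph.Walk.length_reverse]
  rw [hlen]
  have h1 : (px.length : ℝ) ≤ (R : ℝ) := by exact_mod_cast hpx
  have h2 : (py.length : ℝ) ≤ (R : ℝ) := by exact_mod_cast hpy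
  push_cast
  calc ((px.length : ℝ) + py.length) ≤ 2 * (R : ℝ) := by linarith
  _ ≤ 2 * (Real.log (2 * W) / Real.log (1 + phi)) := by linarith
  _ = 2 * Real.log (2 * W) / Real.log (1 + phi) := by ring

include hw0 hsym in
lemma bad_step (U C : Finset V) (hCU : C ⊆ U) (P' : Finset (Finset V)) :
    bad H w U (insert C P') ≤ cutF H w C U + bad H w (U \ C) P' := by
  have hpt : ∀ u x : V,
      (if u ∈ U ∧ x ∈ U ∧ H.Adj u x ∧ ∀ D ∈ insert C P', ¬ (u ∈ D ∧ x ∈ D)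
        then w u x else 0)
      ≤ ((if u ∈ C ∧ x ∈ U ∧ x ∉ C ∧ H.Adj u x then w u x else 0)
        + (if x ∈ C ∧ u ∈ U ∧ u ∉ C ∧ H.Adj u x then w u x else 0))
        + (if u ∈ U \ C ∧ x ∈ U \ C ∧ H.Adj u x ∧ ∀ D ∈ P', ¬ (u ∈ D ∧ x ∈ D)
            then w u x else 0) := by
    intro u x
    have hnn : ∀ (c : Prop) [Decidable c],
        (c → H.Adj u x) → 0 ≤ if c then w u x else 0 := by
      intro c _ hc
      split_ifs with h
      · exact hw0 _ _ (hc h)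
      · exact le_refl 0
    by_cases ht : u ∈ U ∧ x ∈ U ∧ H.Adj u x ∧ ∀ D ∈ insert C P', ¬ (u ∈ D ∧ x ∈ D)
    · rw [if_pos ht]
      obtain ⟨huU, hxU, hadj, hsep⟩ := ht
      have hCC : ¬(u ∈ C ∧ x ∈ C) := hsep C (Finset.mem_insert_self C P')
      by_cases huC : u ∈ C
      · have hxC : x ∉ C := fun h => hCC ⟨huC, h⟩
        have c1 : u ∈ C ∧ x ∈ U ∧ x ∉ C ∧ H.Adj u x := ⟨huC, hxU, hxC, hadj⟩
        rw [if_pos c1]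
        have := hnn (x ∈ C ∧ u ∈ U ∧ u ∉ C ∧ H.Adj u x) (fun h => h.2.2.2)
        have := hnn (u ∈ U \ C ∧ x ∈ U \ C ∧ H.Adj u x ∧ ∀ D ∈ P', ¬ (u ∈ D ∧ x ∈ D))
          (fun h => h.2.2.1)
        linarith
      · by_cases hxC : x ∈ C
        · have c2 : x ∈ C ∧ u ∈ U ∧ u ∉ C ∧ H.Adj u x := ⟨hxC, huU, huC, hadj⟩
          rw [if_pos c2]
          have := hnn (u ∈ C ∧ x ∈ U ∧ x ∉ C ∧ H.Adj u x) (fun h => h.2.2.2)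
          have := hnn (u ∈ U \ C ∧ x ∈ U \ C ∧ H.Adj u x ∧ ∀ D ∈ P', ¬ (u ∈ D ∧ x ∈ D))
            (fun h => h.2.2.1)
          linarith
        · have c3 : u ∈ U \ C ∧ x ∈ U \ C ∧ H.Adj u x ∧ ∀ D ∈ P', ¬ (u ∈ D ∧ x ∈ D) :=
            ⟨Finset.mem_sdiff.2 ⟨huU, huC⟩, Finset.mem_sdiff.2 ⟨hxU, hxC⟩, hadj,
              fun D hD => hsep D (Finset.mem_insert_of_mem hD)⟩
          rw [if_pos c3]
          have := hnn (u ∈ C ∧ x ∈ U ∧ x ∉ C ∧ H.Adj u x) (fun h => h.2.2.2)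
          have := hnn (x ∈ C ∧ u ∈ U ∧ u ∉ C ∧ H.Adj u x) (fun h => h.2.2.2)
          linarith
    · rw [if_neg ht]
      have h1 := hnn (u ∈ C ∧ x ∈ U ∧ x ∉ C ∧ H.Adj u x) (fun h => h.2.2.2)
      have h2 := hnn (x ∈ C ∧ u ∈ U ∧ u ∉ C ∧ H.Adj u x) (fun h => h.2.2.2)
      have h3 := hnn (u ∈ U \ C ∧ x ∈ U \ C ∧ H.Adj u x ∧ ∀ D ∈ P', ¬ (u ∈ D ∧ x ∈ D))
        (fun h => h.2.2.1)
      linarith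
  have hsum : (∑ u : V, ∑ x : V,
      if u ∈ U ∧ x ∈ U ∧ H.Adj u x ∧ ∀ D ∈ insert C P', ¬ (u ∈ D ∧ x ∈ D)
        then w u x else 0)
      ≤ ((∑ u : V, ∑ x : V, if u ∈ C ∧ x ∈ U ∧ x ∉ C ∧ H.Adj u x then w u x else 0)
        + (∑ u : V, ∑ x : V, if x ∈ C ∧ u ∈ U ∧ u ∉ C ∧ H.Adj u x then w u x else 0))
        + (∑ u : V, ∑ x : V,
          if u ∈ U \ C ∧ x ∈ U \ C ∧ H.Adj u x ∧ ∀ D ∈ P', ¬ (u ∈ D ∧ x ∈ D)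
            then w u x else 0) := by
    rw [← Finset.sum_add_distrib, ← Finset.sum_add_distrib]
    refine Finset.sum_le_sum fun u _ => ?_
    rw [← Finset.sum_add_distrib, ← Finset.sum_add_distrib]
    exact Finset.sum_le_sum fun x _ => hpt u x
  have hswap := cut_swap (H := H) hsym C U
  have hc : cutF H w C U = ∑ u : V, ∑ x : V,
      if u ∈ C ∧ x ∈ U ∧ x ∉ C ∧ H.Adj u x then w u x else 0 := rfl
  have e1 : bad H w U (insert C P') = (1/2) * ∑ u : V, ∑ x : V,
      if u ∈ U ∧ x ∈ U ∧ H.Adj u x ∧ ∀ D ∈ insert C P', ¬ (u ∈ D ∧ x ∈ D)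
        then w u x else 0 := rfl
  have e2 : bad H w (U \ C) P' = (1/2) * ∑ u : V, ∑ x : V,
      if u ∈ U \ C ∧ x ∈ U \ C ∧ H.Adj u x ∧ ∀ D ∈ P', ¬ (u ∈ D ∧ x ∈ D)
        then w u x else 0 := rfl
  linarith [hsum, hswap, hc, e1, e2]

include hw0 hsym hw1 in
lemma decomp (phi : ℝ) (hphi0 : 0 < phi) (hphi1 : phi < 1)
    (hW1 : (1:ℝ) ≤ 2 * totalWeight H w) :
    ∀ n (U : Finset V), U.card ≤ n → ∃ P : Finset (Finset V),
      (∀ C ∈ P, C.Nonempty) ∧ (∀ C ∈ P, C ⊆ U) ∧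
      (∀ C ∈ P, ∀ D ∈ P, C ≠ D → Disjoint C D) ∧
      (∀ x ∈ U, ∃ C ∈ P, x ∈ C) ∧
      (∀ C ∈ P, ∀ x y : V, ∀ hx : x ∈ C, ∀ hy : y ∈ C,
        ∃ p : (H.induce (C : Set V)).Walk ⟨x, hx⟩ ⟨y, hy⟩,
          (p.length : ℝ) ≤ 2 * Real.log (2 * totalWeight H w) / Real.log (1 + phi)) ∧
      bad H w U P ≤ phi * wIn H w U := by
  intro n
  induction n with
  | zero =>
      intro U hU
      have hUe : U = ∅ := Finset.card_eq_zero.1 (Nat.le_zero.1 hU)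
      subst hUe
      refine ⟨∅, by simp, by simp, by simp, by simp, by simp, ?_⟩
      have hb : bad H w ∅ (∅ : Finset (Finset V)) = 0 := by
        unfold bad
        simp
      have hi : wIn H w (∅ : Finset V) = 0 := by
        unfold wIn
        simp
      rw [hb, hi]
      simp
  | succ n ih =>
      intro U hU
      rcases Finset.eq_empty_or_nonempty U with hUe | ⟨v, hv⟩
      · subst hUe
        refine ⟨∅, by simp, by simp, by simp, by simp, by simp, ?_⟩
        have hb : bad H w ∅ (∅ : Finset (Finset V)) = 0 := by unfold bad; simp
        have hi : wIn H w (∅ : Finset V) = 0 := by unfold wIn; simp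
        rw [hb, hi]; simp
      · obtain ⟨C, hvC, hCU, hdiam, hcut⟩ :=
          cluster hw0 hsym hw1 phi hphi0 hphi1 hW1 U v hv
        set U' := U \ C with hU'def
        have hcard : U'.card ≤ n := by
          have hss : U' ⊂ U := by
            refine Finset.ssubset_iff_of_subset (Finset.sdiff_subset)
              |>.2 ⟨v, hv, ?_⟩
            simp [hU'def, hvC]
          have := Finset.card_lt_card hss
          omega
        obtain ⟨P', hP1, hP2, hP3, hP4, hP5, hP6⟩ := ih U' hcard
        refine ⟨insert C P', ?_, ?_, ?_, ?_, ?_, ?_⟩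
        · intro D hD
          rcases Finset.mem_insert.1 hD with rfl | hD'
          · exact ⟨v, hvC⟩
          · exact hP1 D hD'
        · intro D hD
          rcases Finset.mem_insert.1 hD with rfl | hD'
          · exact hCU
          · exact (hP2 D hD').trans (Finset.sdiff_subset)
        · intro D1 hD1 D2 hD2 hne'
          have hdisj : ∀ D ∈ P', Disjoint C D := by
            intro D hD
            refine Finset.disjoint_left.2 fun a haC haD => ?_
            exact (Finset.mem_sdiff.1 (hP2 D hD haD)).2 haC
          rcases Finset.mem_insert.1 hD1 with rfl | h1
          · rcases Finset.mem_insert.1 hD2 with rfl | h2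
            · exact absurd rfl hne'
            · exact hdisj D2 h2
          · rcases Finset.mem_insert.1 hD2 with rfl | h2
            · exact (hdisj D1 h1).symm
            · exact hP3 D1 h1 D2 h2 hne'
        · intro x hx
          by_cases hxC : x ∈ C
          · exact ⟨C, Finset.mem_insert_self C P', hxC⟩
          · obtain ⟨D, hD, hxD⟩ := hP4 x (Finset.mem_sdiff.2 ⟨hx, hxC⟩)
            exact ⟨D, Finset.mem_insert_of_mem hD, hxD⟩
        · intro D hD x y hx hy
          rcases Finset.mem_insert.1 hD with rfl | hD'
          · exact hdiam x y hx hy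
          · exact hP5 D hD' x y hx hy
        · have h1 := bad_step hw0 hsym U C hCU P'
          have h2 := wIn_superadd hw0 (H := H) (w := w) hCU
          have h3 := hP6
          have h4 : cutF H w C U ≤ phi * wIn H w C := hcut
          nlinarith [wIn_nonneg hw0 (H := H) (w := w) C,
            wIn_nonneg hw0 (H := H) (w := w) U']

end Helpers

set_option maxHeartbeats 1000000 in
/-- low-diameter decomposition. Let `H` be a weighted graph with all edge
weights at least `1`, at least one edge, and total weight `W`; let `phi ∈ (0,1)`. Then `V`
can be partitioned into nonempty clusters so that within every cluster any two vertices are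
joined by a path of at most `2 ln(2W) / ln(1+phi)` edges in the induced unweighted subgraph,
and the total weight of inter-cluster edges is at most `2 * phi * W`. -/
theorem stmt15 (V : Type) [Fintype V] (H : SimpleGraph V) (w : V → V → ℝ)
    (hsym : ∀ u v, w u v = w v u)
    (hw : ∀ u v, H.Adj u v → 1 ≤ w u v)
    (hne : ∃ u v, H.Adj u v)
    (phi : ℝ) (hphi0 : 0 < phi) (hphi1 : phi < 1) :
    ∃ P : Finset (Finset V),
      (∀ C ∈ P, C.Nonempty) ∧
      (∀ C ∈ P, ∀ D ∈ P, C ≠ D → Disjoint C D) ∧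
      (∀ x : V, ∃ C ∈ P, x ∈ C) ∧
      (∀ C ∈ P, ∀ x y : V, ∀ hx : x ∈ C, ∀ hy : y ∈ C,
        ∃ p : (H.induce (C : Set V)).Walk ⟨x, hx⟩ ⟨y, hy⟩,
          (p.length : ℝ) ≤ 2 * Real.log (2 * totalWeight H w) / Real.log (1 + phi)) ∧
      (1 / 2) * (∑ u : V, ∑ v : V,
          if H.Adj u v ∧ ∀ C ∈ P, ¬ (u ∈ C ∧ v ∈ C) then w u v else 0) ≤
        2 * phi * totalWeight H w := by
  have hw0 : ∀ u v, H.Adj u v → 0 ≤ w u v :=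
    fun u v h => le_trans zero_le_one (hw u v h)
  have hW1 : (1 : ℝ) ≤ 2 * totalWeight H w := by
    obtain ⟨u0, v0, hadj⟩ := hne
    have e : totalWeight H w
        = (1/2) * ∑ u : V, ∑ v : V, (if H.Adj u v then w u v else 0) := rfl
    have hnn : ∀ u v : V, 0 ≤ if H.Adj u v then w u v else 0 := by
      intro u v
      split_ifs with h
      · exact hw0 u v h
      · exact le_refl 0
    have h1 : w u0 v0 ≤ ∑ v : V, if H.Adj u0 v then w u0 v else 0 := by
      have := Finset.single_le_sum (f := fun v => if H.Adj u0 v then w u0 v else 0)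
        (fun v _ => hnn u0 v) (Finset.mem_univ v0)
      rwa [if_pos hadj] at this
    have h2 : (∑ v : V, if H.Adj u0 v then w u0 v else 0)
        ≤ ∑ u : V, ∑ v : V, (if H.Adj u v then w u v else 0) :=
      Finset.single_le_sum
        (f := fun u => ∑ v : V, if H.Adj u v then w u v else 0)
        (fun u _ => Finset.sum_nonneg fun v _ => hnn u v) (Finset.mem_univ u0)
    have h3 := hw u0 v0 hadj
    rw [e]
    linarith
  obtain ⟨P, hP1, hP2, hP3, hP4, hP5, hP6⟩ :=
    decomp hw0 hsym hw phi hphi0 hphi1 hW1 (Fintype.card V) Finset.univ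
      (by rw [Finset.card_univ])
  refine ⟨P, hP1, hP3, fun x => hP4 x (Finset.mem_univ x), hP5, ?_⟩
  have ebad : bad H w Finset.univ P = (1 / 2) * (∑ u : V, ∑ v : V,
      if H.Adj u v ∧ ∀ C ∈ P, ¬ (u ∈ C ∧ v ∈ C) then w u v else 0) := by
    unfold bad
    congr 1
    refine Finset.sum_congr rfl fun u _ => Finset.sum_congr rfl fun v _ => ?_
    simp [Finset.mem_univ]
  have ewin : wIn H w Finset.univ = totalWeight H w := by
    unfold wIn totalWeight
    congr 1
    refine Finset.sum_congr rfl fun u _ => Finset.sum_congr rfl fun v _ => ?_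
    simp [Finset.mem_univ]
  rw [← ebad]
  rw [ewin] at hP6
  nlinarith [hP6]
end

section
/- There exists a universal constant C > 0 such that for every integer k ≥ 1 and every finite simple unweighted graph G=(V,E) on n ≥ 2 vertices, there exists a subgraph H of G with at most C * k * n^{1 + 1/k} * log n edges such that d_H(u,v) ≤ (2k-1) * d_G(u,v) for all u,v ∈ V; i.e., every n-vertex unweighted graph admits a (2k-1)-spanner with O(k * n^{1+1/k} * log n) edges. -/
open scoped Classical
open Finset
namespace Span16

open SimpleGraph Walk

variable {V : Type}

/-- `F` has no cycle of length at most `2k`. -/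
def NSC (F : SimpleGraph V) (k : ℕ) : Prop :=
  ∀ ⦃v : V⦄ (c : F.Walk v v), c.IsCycle → 2 * k + 1 ≤ c.length

lemma loop_path_nil {F : SimpleGraph V} {u : V} (p : F.Walk u u) (hp : p.IsPath) :
    p = SimpleGraph.Walk.nil := by
  cases p with
  | nil => rfl
  | cons h t =>
    rw [SimpleGraph.Walk.cons_isPath_iff] at hp
    exact absurd t.end_mem_support hp.2
lemma path_edge_head {F : SimpleGraph V} {b a c : V} (p : F.Walk b a)
    (hp : p.IsPath) (he : s(b, c) ∈ p.edges) :
    ∃ (h : F.Adj b c) (t : F.Walk c a), p = SimpleGraph.Walk.cons h t := by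
  cases p with
  | nil => simp at he
  | @cons _ z _ h0 t0 =>
    rw [SimpleGraph.Walk.edges_cons, List.mem_cons] at he
    rw [SimpleGraph.Walk.cons_isPath_iff] at hp
    rcases he with he | he
    · have hz : z = c := by
        rcases Sym2.eq_iff.mp he with ⟨-, rfl⟩ | ⟨h1, -⟩
        · rfl
        · exact absurd h1 h0.ne
      subst hz
      exact ⟨h0, t0, rfl⟩
    · exact absurd (SimpleGraph.Walk.fst_mem_support_of_mem_edges t0 he) hp.2
lemma exists_prefix_until {F : SimpleGraph V} {x v : V} (p : F.Walk x v)
    (S : Set V) (hv : v ∈ S) :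
    ∃ (w : V) (p₁ : F.Walk x w), w ∈ S ∧ p₁.length ≤ p.length ∧
      (∀ z ∈ p₁.support, z ≠ w → z ∉ S) ∧ (∀ z ∈ p₁.support, z ∈ p.support) ∧
      (p.IsPath → p₁.IsPath) := by
  induction p with
  | nil =>
    refine ⟨_, SimpleGraph.Walk.nil, hv, le_rfl, ?_, fun z hz => hz, fun h => h⟩
    intro z hz hzx; simp only [SimpleGraph.Walk.support_nil, List.mem_singleton] at hz
    exact absurd hz hzx
  | @cons x y v h q ih =>
    by_cases hx : x ∈ S
    · refine ⟨_, SimpleGraph.Walk.nil, hx, by simp, ?_, ?_, fun _ => SimpleGraph.Walk.IsPath.nil⟩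
      · intro z hz hzx; simp only [SimpleGraph.Walk.support_nil, List.mem_singleton] at hz
        exact absurd hz hzx
      · intro z hz; simp only [SimpleGraph.Walk.support_nil, List.mem_singleton] at hz
        simp [hz]
    · obtain ⟨w, p₁, hw, hlen, hout, hsub, hpath⟩ := ih hv
      refine ⟨w, SimpleGraph.Walk.cons h p₁, hw,
        by simp only [SimpleGraph.Walk.length_cons]; omega, ?_, ?_, ?_⟩
      · intro z hz hzw
        rw [SimpleGraph.Walk.support_cons, List.mem_cons] at hz
        rcases hz with rfl | hz
        · exact hx
        · exact hout z hz hzw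
      · intro z hz
        rw [SimpleGraph.Walk.support_cons, List.mem_cons] at hz
        rcases hz with rfl | hz
        · exact SimpleGraph.Walk.start_mem_support _
        · exact List.mem_cons_of_mem _ (hsub z hz)
      · intro hp
        rw [SimpleGraph.Walk.cons_isPath_iff] at hp ⊢
        exact ⟨hpath hp.1, fun hmem => hp.2 (hsub x hmem)⟩
lemma cycle_of_two_paths {F : SimpleGraph V} :
    ∀ (m : ℕ) {u v : V} (p q : F.Walk u v), p.length + q.length ≤ m →
      p.IsPath → q.IsPath → p ≠ q →
      ∃ (w : V) (c : F.Walk w w), c.IsCycle ∧ c.length ≤ p.length + q.length := by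
  intro m
  induction m with
  | zero =>
    intro u v p q hm hp hq hne
    exfalso
    cases p with
    | nil =>
      have : q = Walk.nil := by
        have hq0 : q.length = 0 := by simpa using hm
        exact (SimpleGraph.Walk.length_eq_zero_iff.mp hq0).eq_nil
      exact hne this.symm
    | cons h t => simp [SimpleGraph.Walk.length_cons] at hm
  | succ m ih =>
    intro u v p q hm hp hq hne
    cases p with
    | nil =>
      have : q = Walk.nil := loop_path_nil q hq
      exact absurd this.symm hne
    | @cons _ x _ hpx p' =>
      cases q with
      | nil => exact absurd (loop_path_nil _ hp) hne
      | @cons _ y _ hqy q' =>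
        by_cases hxy : x = y
        · subst hxy
          have hne' : p' ≠ q' := fun hh => hne (by rw [hh])
          have hp' := ((SimpleGraph.Walk.cons_isPath_iff _ _).mp hp).1
          have hq' := ((SimpleGraph.Walk.cons_isPath_iff _ _).mp hq).1
          obtain ⟨w, c, hc, hcl⟩ := ih p' q'
            (by simp only [SimpleGraph.Walk.length_cons] at hm; omega) hp' hq' hne'
          exact ⟨w, c, hc, by simp only [SimpleGraph.Walk.length_cons]; omega⟩
        · obtain ⟨hp', hup'⟩ := (SimpleGraph.Walk.cons_isPath_iff _ _).mp hp
          obtain ⟨hq', huq'⟩ := (SimpleGraph.Walk.cons_isPath_iff _ _).mp hq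
          obtain ⟨w, p₁, hwq, hlen1, hout, hsub, hpath1⟩ :=
            exists_prefix_until p' {z | z ∈ (SimpleGraph.Walk.cons hqy q').support}
              ((SimpleGraph.Walk.cons hqy q').end_mem_support)
          have hp₁ : p₁.IsPath := hpath1 hp'
          have hu1 : u ∉ p₁.support := fun h => hup' (hsub u h)
          have hwu : w ≠ u := fun h => hu1 (h ▸ p₁.end_mem_support)
          have hwq' : w ∈ q'.support := by
            have := hwq
            simp only [Set.mem_setOf_eq, SimpleGraph.Walk.support_cons, List.mem_cons] at this
            tauto
          set q₁ := q'.takeUntil w hwq' with hq₁def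
          have hq₁ : q₁.IsPath := hq'.takeUntil hwq'
          have hlen2 : q₁.length ≤ q'.length := SimpleGraph.Walk.length_takeUntil_le q' hwq'
          have hu2 : u ∉ q₁.support :=
            fun h => huq' (SimpleGraph.Walk.support_takeUntil_subset q' hwq' h)
          set R : F.Walk w u := q₁.reverse.append (SimpleGraph.Walk.cons hqy.symm .nil)
            with hRdef
          set W : F.Walk x u := p₁.append R with hWdef
          have hWlen : W.length = p₁.length + q₁.length + 1 := by
            simp [hWdef, hRdef, SimpleGraph.Walk.length_append]
            omega
          set T := q₁.reverse.support.tail with hTdef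
          have hq₁rev : q₁.reverse.support = w :: T := SimpleGraph.Walk.support_eq_cons _
          have hcons : (w :: T).Nodup := by
            have := (hq₁.reverse).support_nodup
            rwa [hq₁rev] at this
          have hTnodup : T.Nodup := (List.nodup_cons.mp hcons).2
          have hwT : w ∉ T := (List.nodup_cons.mp hcons).1
          have hTsub : ∀ z ∈ T, z ∈ q₁.support := by
            intro z hz
            have : z ∈ q₁.reverse.support := by rw [hq₁rev]; exact List.mem_cons_of_mem _ hz
            rwa [SimpleGraph.Walk.support_reverse, List.mem_reverse] at this
          have hWsupp : W.support = p₁.support ++ (T ++ [u]) := by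
            rw [hWdef, SimpleGraph.Walk.support_append, hRdef,
              SimpleGraph.Walk.tail_support_append]
            simp [hTdef]
          have hW : W.IsPath := by
            rw [SimpleGraph.Walk.isPath_def, hWsupp]
            rw [List.nodup_append]
            refine ⟨hp₁.support_nodup, ?_, ?_⟩
            · rw [List.nodup_append]
              refine ⟨hTnodup, List.nodup_singleton u, ?_⟩
              rintro z hz _ hz2 rfl
              rw [List.mem_singleton] at hz2
              subst hz2
              exact hu2 (hTsub z hz)
            · rintro z hz1 _ hz2 rfl
              rw [List.mem_append, List.mem_singleton] at hz2
              rcases hz2 with hz2 | rfl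
              · have hzq : z ∈ q₁.support := hTsub z hz2
                have hzS : z ∈ {z | z ∈ (SimpleGraph.Walk.cons hqy q').support} := by
                  simp only [Set.mem_setOf_eq, SimpleGraph.Walk.support_cons, List.mem_cons]
                  exact Or.inr (SimpleGraph.Walk.support_takeUntil_subset q' hwq' hzq)
                by_cases hzw : z = w
                · subst hzw; exact hwT hz2
                · exact hout z hz1 hzw hzS
              · exact hu1 hz1
          have hnoe : s(u, x) ∉ W.edges := by
            intro hmem
            rw [Sym2.eq_swap] at hmem
            obtain ⟨h', t, hWeq⟩ := path_edge_head W hW hmem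
            have ht : t = Walk.nil :=
              loop_path_nil t ((SimpleGraph.Walk.cons_isPath_iff _ _).mp (hWeq ▸ hW)).1
            have hW1 : W.length = 1 := by rw [hWeq, ht]; simp
            rw [hWlen] at hW1
            have hp10 : p₁.length = 0 := by omega
            have hq10 : q₁.length = 0 := by omega
            have hx : x = w := SimpleGraph.Walk.eq_of_length_eq_zero hp10
            have hy : y = w := SimpleGraph.Walk.eq_of_length_eq_zero hq10
            exact hxy (hx.trans hy.symm)
          refine ⟨u, SimpleGraph.Walk.cons hpx W, ?_, ?_⟩
          · exact (SimpleGraph.Walk.cons_isCycle_iff W hpx).mpr ⟨hW, hnoe⟩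
          · simp only [SimpleGraph.Walk.length_cons, hWlen]
            omega

lemma path_unique {F : SimpleGraph V} {k : ℕ} (hF : NSC F k) {u v : V}
    (p q : F.Walk u v) (hp : p.IsPath) (hq : q.IsPath)
    (hlen : p.length + q.length ≤ 2 * k) : p = q := by
  by_contra hne
  obtain ⟨w, c, hc, hcl⟩ := cycle_of_two_paths (p.length + q.length) p q le_rfl hp hq hne
  exact absurd (hF c hc) (by omega)
lemma NSC_bot (k : ℕ) : NSC (⊥ : SimpleGraph V) k := by
  intro v c hc
  cases c with
  | nil => exact absurd rfl hc.ne_nil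
  | cons h t => exact absurd h (by simp)
lemma NSC_anti {F F' : SimpleGraph V} {k : ℕ} (hle : F' ≤ F) (h : NSC F k) : NSC F' k := by
  intro v c hc
  have := h (c.mapLe hle) ((SimpleGraph.Walk.mapLe_isCycle hle).mpr hc)
  simpa [SimpleGraph.Walk.mapLe] using this
lemma exists_girth_spanner [Fintype V] (G : SimpleGraph V) (k : ℕ) (hk : 1 ≤ k) :
    ∃ H : SimpleGraph V, H ≤ G ∧ NSC H k ∧
      ∀ u v, G.Adj u v → ∃ q : H.Walk u v, q.length ≤ 2 * k - 1 := by
  set A : Set ℕ := (fun F : SimpleGraph V => F.edgeSet.ncard) ''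
    {F : SimpleGraph V | F ≤ G ∧ NSC F k} with hA
  have hAne : A.Nonempty := ⟨(⊥ : SimpleGraph V).edgeSet.ncard, ⟨⊥, ⟨bot_le, NSC_bot k⟩, rfl⟩⟩
  have hAfin : A.Finite := Set.Finite.image _ (Set.toFinite _)
  have hmem := hAne.csSup_mem hAfin
  obtain ⟨H, ⟨hHG, hHnsc⟩, hHcard⟩ := hmem
  refine ⟨H, hHG, hHnsc, ?_⟩
  intro u v huv
  by_cases hadj : H.Adj u v
  · exact ⟨SimpleGraph.Walk.cons hadj .nil, by simp; omega⟩
  -- add the edge; maximality gives a short cycle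
  set e : Sym2 V := s(u, v) with he
  set H' : SimpleGraph V := H ⊔ SimpleGraph.edge u v with hH'
  have hne : u ≠ v := huv.ne
  have hH'G : H' ≤ G := by
    rw [hH']
    refine sup_le hHG ?_
    intro a b hab
    rw [SimpleGraph.edge_adj] at hab
    rcases hab.1 with ⟨rfl, rfl⟩ | ⟨rfl, rfl⟩
    · exact huv
    · exact huv.symm
  have hH'edge : H'.edgeSet = insert e H.edgeSet := by
    rw [hH', SimpleGraph.edgeSet_sup, SimpleGraph.edge_edgeSet_of_ne hne]
    rw [Set.union_singleton]
  have henot : e ∉ H.edgeSet := hadj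
  have hcard' : H'.edgeSet.ncard = H.edgeSet.ncard + 1 := by
    rw [hH'edge, Set.ncard_insert_of_notMem henot (Set.toFinite _)]
  have hnotnsc : ¬ NSC H' k := by
    intro hnsc
    have : H'.edgeSet.ncard ∈ A := ⟨H', ⟨hH'G, hnsc⟩, rfl⟩
    have hle := le_csSup hAfin.bddAbove this
    have hHc : H.edgeSet.ncard = sSup A := hHcard
    rw [← hHc] at hle
    omega
  rw [NSC] at hnotnsc
  push_neg at hnotnsc
  obtain ⟨v₀, c, hc, hclen⟩ := hnotnsc
  have hclen' : c.length ≤ 2 * k := by omega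
  -- the cycle must use e
  have hemem : e ∈ c.edges := by
    by_contra hemem
    have hsub : ∀ e' ∈ c.edges, e' ∈ H.edgeSet := by
      intro e' he'
      have := c.edges_subset_edgeSet he'
      rw [hH'edge] at this
      rcases this with rfl | h2
      · exact absurd he' hemem
      · exact h2
    have hct := hHnsc (c.transfer H hsub) (hc.transfer hsub)
    rw [SimpleGraph.Walk.length_transfer] at hct
    omega
  have hu : u ∈ c.support := SimpleGraph.Walk.fst_mem_support_of_mem_edges c hemem
  set c' : H'.Walk u u := c.rotate u hu with hc'def
  have hc' : c'.IsCycle := hc.rotate hu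
  have hc'len : c'.length = c.length := by
    have h1 := congrArg SimpleGraph.Walk.length (c.take_spec hu)
    rw [SimpleGraph.Walk.length_append] at h1
    have h2 : c'.length = (c.dropUntil u hu).length + (c.takeUntil u hu).length := by
      rw [hc'def, SimpleGraph.Walk.rotate, SimpleGraph.Walk.length_append]
    omega
  have hemem' : e ∈ c'.edges := (c.rotate_edges u hu).mem_iff.mpr hemem
  -- decompose c'
  cases hcc : c' with
  | nil => rw [hcc] at hc'; exact absurd rfl hc'.ne_nil
  | @cons _ z _ h0 tail =>
    rw [hcc] at hc' hemem' hc'len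
    obtain ⟨htail, hnotail⟩ := (SimpleGraph.Walk.cons_isCycle_iff tail h0).mp hc'
    have hlen3 : tail.length + 1 ≤ 2 * k := by
      rw [SimpleGraph.Walk.length_cons] at hc'len; omega
    by_cases hez : s(u, z) = e
    · -- first edge is e, so z = v
      have hzv : z = v := by
        rw [he] at hez
        rcases Sym2.eq_iff.mp hez with ⟨-, rfl⟩ | ⟨h1, -⟩
        · rfl
        · exact absurd h1 hne
      subst hzv
      have hsub : ∀ e' ∈ tail.edges, e' ∈ H.edgeSet := by
        intro e' he'
        have := tail.edges_subset_edgeSet he'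
        rw [hH'edge] at this
        rcases this with rfl | h2
        · exact absurd he' hnotail
        · exact h2
      refine ⟨(tail.transfer H hsub).reverse, ?_⟩
      rw [SimpleGraph.Walk.length_reverse, SimpleGraph.Walk.length_transfer]
      omega
    · -- e is inside tail
      have hetail : e ∈ tail.edges := by
        rw [SimpleGraph.Walk.edges_cons] at hemem'
        rcases List.mem_cons.mp hemem' with h1 | h1
        · exact absurd h1.symm hez
        · exact h1
      have herev : s(u, v) ∈ tail.reverse.edges := by
        rw [SimpleGraph.Walk.edges_reverse, List.mem_reverse]; exact hetail
      obtain ⟨h1, t, hteq⟩ := path_edge_head tail.reverse htail.reverse herev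
      have ht : t.IsPath ∧ u ∉ t.support := by
        have := htail.reverse
        rw [hteq] at this
        exact (SimpleGraph.Walk.cons_isPath_iff _ _).mp this
      -- W = cons h0 t.reverse : Walk u v in H'
      set W : H'.Walk u v := SimpleGraph.Walk.cons h0 t.reverse with hWdef
      have hWnoe : e ∉ W.edges := by
        rw [hWdef, SimpleGraph.Walk.edges_cons]
        intro hmem
        rcases List.mem_cons.mp hmem with h2 | h2
        · exact hez h2.symm
        · -- e ∈ t.reverse.edges, but tail.reverse path has nodup edges, e is head edge
          rw [SimpleGraph.Walk.edges_reverse, List.mem_reverse] at h2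
          have hnodup := htail.reverse.edges_nodup
          rw [hteq, SimpleGraph.Walk.edges_cons] at hnodup
          rw [he] at h2
          exact (List.nodup_cons.mp hnodup).1 h2
      have hsub : ∀ e' ∈ W.edges, e' ∈ H.edgeSet := by
        intro e' he'
        have := W.edges_subset_edgeSet he'
        rw [hH'edge] at this
        rcases this with rfl | h2
        · exact absurd he' hWnoe
        · exact h2
      refine ⟨W.transfer H hsub, ?_⟩
      rw [SimpleGraph.Walk.length_transfer]
      have h2 : tail.length = t.length + 1 := by
        have := congrArg SimpleGraph.Walk.length hteq
        rw [SimpleGraph.Walk.length_reverse, SimpleGraph.Walk.length_cons] at this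
        omega
      rw [hWdef, SimpleGraph.Walk.length_cons, SimpleGraph.Walk.length_reverse]
      omega
lemma secondLast_append_single {F : SimpleGraph V} {r a w : V} (p : F.Walk r a)
    (h : F.Adj a w) :
    (p.append (SimpleGraph.Walk.cons h .nil)).reverse.getVert 1 = a := by
  rw [SimpleGraph.Walk.reverse_append]
  rw [SimpleGraph.Walk.getVert_append]
  simp [SimpleGraph.Walk.getVert_zero]
lemma append_single_isPath {F : SimpleGraph V} {r a w : V} {p : F.Walk r a}
    (hp : p.IsPath) (h : F.Adj a w) (hw : w ∉ p.support) :
    (p.append (SimpleGraph.Walk.cons h .nil)).IsPath := by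
  rw [SimpleGraph.Walk.isPath_def, SimpleGraph.Walk.support_append]
  simp only [SimpleGraph.Walk.support_cons, SimpleGraph.Walk.support_nil, List.tail_cons]
  rw [List.nodup_append]
  refine ⟨hp.support_nodup, List.nodup_singleton w, ?_⟩
  rintro z hz1 _ hz2 rfl
  rw [List.mem_singleton] at hz2
  subst hz2
  exact hw hz1
lemma no_min_degree [Fintype V] {k d : ℕ} (hk : 1 ≤ k) (hd : 1 ≤ d)
    (hn : Fintype.card V ≤ d ^ k) {F : SimpleGraph V} (hF : NSC F k)
    {r : V} (hr : r ∈ F.support)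
    (hdeg : ∀ v ∈ F.support, d + 1 ≤ F.degree v) : False := by
  set D : ℕ → Finset V := fun i =>
    Finset.univ.filter (fun v => ∃ p : F.Walk r v, p.IsPath ∧ p.length = i) with hD
  have hDmem : ∀ (i : ℕ) (v : V), v ∈ D i ↔ ∃ p : F.Walk r v, p.IsPath ∧ p.length = i := by
    intro i v; simp [hD]
  have hDcard : ∀ i, 1 ≤ i → i ≤ k → (d + 1) * d ^ (i - 1) ≤ (D i).card := by
    intro i
    induction i with
    | zero => omega
    | succ i ih =>
      intro h1 hik
      by_cases hi0 : i = 0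
      · subst hi0
        have hsub : F.neighborFinset r ⊆ D 1 := by
          intro v hv
          rw [SimpleGraph.mem_neighborFinset] at hv
          rw [hDmem]
          refine ⟨SimpleGraph.Walk.cons hv .nil, ?_, rfl⟩
          rw [SimpleGraph.Walk.cons_isPath_iff]
          exact ⟨SimpleGraph.Walk.IsPath.nil, by simp [hv.ne]⟩
        calc (d + 1) * d ^ (1 - 1) = d + 1 := by ring
          _ ≤ F.degree r := hdeg r hr
          _ = (F.neighborFinset r).card := rfl
          _ ≤ (D 1).card := Finset.card_le_card hsub
      · have hii : 1 ≤ i := by omega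
        have hik' : i ≤ k := by omega
        have hcardi := ih hii hik'
        have hsel : ∀ v : {x // x ∈ D i}, ∃ p : F.Walk r v.1, p.IsPath ∧ p.length = i :=
          fun v => (hDmem i v.1).mp v.2
        choose P hPpath hPlen using hsel
        set N : {x // x ∈ D i} → Finset V :=
          fun v => F.neighborFinset v.1 \ (P v).support.toFinset with hN
        have hvsupp : ∀ v : {x // x ∈ D i}, v.1 ∈ F.support := by
          intro v
          have hnil : ¬ ((P v).reverse).Nil := by
            rw [SimpleGraph.Walk.nil_iff_length_eq, SimpleGraph.Walk.length_reverse, hPlen]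
            omega
          exact ⟨_, SimpleGraph.Walk.adj_snd hnil⟩
        -- the only neighbor of v on P v is the second-to-last vertex
        have hinter : ∀ v : {x // x ∈ D i},
            F.neighborFinset v.1 ∩ (P v).support.toFinset ⊆ {(P v).reverse.getVert 1} := by
          intro v w hw
          rw [Finset.mem_inter, SimpleGraph.mem_neighborFinset, List.mem_toFinset] at hw
          obtain ⟨hadj, hwsupp⟩ := hw
          set q : F.Walk w v.1 := (P v).dropUntil w hwsupp with hq
          have hqpath : q.IsPath := (hPpath v).dropUntil hwsupp
          have hqlen : q.length ≤ i :=
            le_of_le_of_eq (SimpleGraph.Walk.length_dropUntil_le (P v) hwsupp) (hPlen v)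
          have hsingle : (SimpleGraph.Walk.cons hadj.symm .nil : F.Walk w v.1).IsPath := by
            rw [SimpleGraph.Walk.cons_isPath_iff]
            exact ⟨SimpleGraph.Walk.IsPath.nil, by simp [hadj.ne']⟩
          have heq : q = SimpleGraph.Walk.cons hadj.symm .nil := by
            apply path_unique hF _ _ hqpath hsingle
            simp only [SimpleGraph.Walk.length_cons, SimpleGraph.Walk.length_nil]
            omega
          -- so w is second-to-last on P v
          have hspec := (P v).take_spec hwsupp
          rw [Finset.mem_singleton]
          have : (P v) = ((P v).takeUntil w hwsupp).append (SimpleGraph.Walk.cons hadj.symm .nil) := by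
            rw [← heq, hq, hspec]
          rw [this, secondLast_append_single]
        have hNcard : ∀ v : {x // x ∈ D i}, d ≤ (N v).card := by
          intro v
          have h1 : (F.neighborFinset v.1).card =
              (N v).card + (F.neighborFinset v.1 ∩ (P v).support.toFinset).card := by
            rw [hN]
            exact (Finset.card_sdiff_add_card_inter _ _).symm
          have h2 : (F.neighborFinset v.1 ∩ (P v).support.toFinset).card ≤ 1 := by
            calc _ ≤ ({(P v).reverse.getVert 1} : Finset V).card :=
                  Finset.card_le_card (hinter v)
              _ = 1 := Finset.card_singleton _
          have h3 := hdeg v.1 (hvsupp v)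
          rw [SimpleGraph.degree] at h3
          omega
        have hNsub : ∀ v : {x // x ∈ D i}, N v ⊆ D (i + 1) := by
          intro v w hw
          rw [hN, Finset.mem_sdiff, SimpleGraph.mem_neighborFinset, List.mem_toFinset] at hw
          obtain ⟨hadj, hwsupp⟩ := hw
          rw [hDmem]
          refine ⟨(P v).append (SimpleGraph.Walk.cons hadj .nil),
            append_single_isPath (hPpath v) hadj hwsupp, ?_⟩
          rw [SimpleGraph.Walk.length_append]
          simp [hPlen v]
        have hNdisj : ∀ v₁ v₂ : {x // x ∈ D i}, v₁ ≠ v₂ → Disjoint (N v₁) (N v₂) := by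
          intro v₁ v₂ hne
          rw [Finset.disjoint_left]
          intro w hw1 hw2
          rw [hN, Finset.mem_sdiff, SimpleGraph.mem_neighborFinset, List.mem_toFinset] at hw1 hw2
          set E₁ := (P v₁).append (SimpleGraph.Walk.cons hw1.1 .nil) with hE1
          set E₂ := (P v₂).append (SimpleGraph.Walk.cons hw2.1 .nil) with hE2
          have hE1p : E₁.IsPath := append_single_isPath (hPpath v₁) hw1.1 hw1.2
          have hE2p : E₂.IsPath := append_single_isPath (hPpath v₂) hw2.1 hw2.2
          have hElen : E₁.length = i + 1 ∧ E₂.length = i + 1 := by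
            constructor <;>
              (rw [SimpleGraph.Walk.length_append]; simp [hPlen])
          have heq : E₁ = E₂ := by
            apply path_unique hF _ _ hE1p hE2p
            omega
          have hv1 : E₁.reverse.getVert 1 = v₁.1 := secondLast_append_single _ _
          have hv2 : E₂.reverse.getVert 1 = v₂.1 := secondLast_append_single _ _
          rw [heq, hv2] at hv1
          exact hne (Subtype.ext hv1.symm)
        -- put it together
        have hbi : (D i).attach.biUnion N ⊆ D (i + 1) := by
          intro w hw
          rw [Finset.mem_biUnion] at hw
          obtain ⟨v, -, hv⟩ := hw
          exact hNsub v hv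
        have hcardbi : ((D i).attach.biUnion N).card = ∑ v ∈ (D i).attach, (N v).card :=
          Finset.card_biUnion (fun v₁ _ v₂ _ h => hNdisj v₁ v₂ h)
        have hsum : (D i).attach.card * d ≤ ∑ v ∈ (D i).attach, (N v).card := by
          have := Finset.card_nsmul_le_sum (D i).attach (fun v => (N v).card) d
            (fun x _ => hNcard x)
          simpa [smul_eq_mul] using this
        have hfinal : d * (D i).card ≤ (D (i + 1)).card := by
          have h4 := Finset.card_le_card hbi
          rw [hcardbi] at h4
          rw [Finset.card_attach] at hsum
          calc d * (D i).card = (D i).card * d := Nat.mul_comm _ _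
            _ ≤ ∑ v ∈ (D i).attach, (N v).card := hsum
            _ ≤ (D (i + 1)).card := h4
        calc (d + 1) * d ^ (i + 1 - 1) = ((d + 1) * d ^ (i - 1)) * d := by
              have : i + 1 - 1 = (i - 1) + 1 := by omega
              rw [this, pow_succ]; ring
          _ ≤ (D i).card * d := Nat.mul_le_mul_right d hcardi
          _ = d * (D i).card := Nat.mul_comm _ _
          _ ≤ (D (i + 1)).card := hfinal
  have hfin := hDcard k hk le_rfl
  have hle : (D k).card ≤ Fintype.card V := by
    apply Finset.card_le_card (Finset.subset_univ _) |>.trans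
    simp
  have hdk : (d + 1) * d ^ (k - 1) = d ^ k + d ^ (k - 1) := by
    have : d ^ k = d ^ (k - 1) * d := by
      rw [← pow_succ]; congr 1; omega
    rw [this]; ring
  have hpos : 1 ≤ d ^ (k - 1) := Nat.one_le_pow _ _ (by omega)
  omega
lemma sparse_aux [Fintype V] {k d : ℕ} (hk : 1 ≤ k) (hd : 1 ≤ d)
    (hn : Fintype.card V ≤ d ^ k) :
    ∀ s : Finset V, ∀ F : SimpleGraph V, NSC F k → F.support ⊆ ↑s →
      F.edgeFinset.card ≤ d * s.card := by
  intro s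
  induction s using Finset.strongInduction with
  | _ s ihs =>
    intro F hF hsup
    by_cases hdeg : ∀ v ∈ F.support, d + 1 ≤ F.degree v
    · -- support must be empty
      have hsupp : F.support = ∅ := by
        by_contra h
        obtain ⟨r, hr⟩ := Set.nonempty_iff_ne_empty.mpr h
        exact no_min_degree hk hd hn hF hr hdeg
      have : F.edgeFinset = ∅ := by
        rw [Finset.eq_empty_iff_forall_notMem]
        intro e he
        rw [SimpleGraph.mem_edgeFinset] at he
        induction e with
        | _ a b =>
          have : a ∈ F.support := ⟨b, he⟩
          rw [hsupp] at this
          exact this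
      rw [this]
      simp
    · push_neg at hdeg
      obtain ⟨v, hvsupp, hvdeg⟩ := hdeg
      have hvdeg' : F.degree v ≤ d := by omega
      have hvs : v ∈ s := hsup hvsupp
      set F' : SimpleGraph V := F.deleteEdges (F.incidenceSet v) with hF'
      have hF'le : F' ≤ F := F.deleteEdges_le _
      have hF'nsc : NSC F' k := NSC_anti hF'le hF
      have hF'sup : F'.support ⊆ ↑(s.erase v) := by
        intro w hw
        obtain ⟨z, hz⟩ := (show ∃ z, F'.Adj w z from hw)
        rw [hF', SimpleGraph.deleteEdges_adj] at hz
        have hws : w ∈ s := hsup ⟨z, hz.1⟩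
        have hwv : w ≠ v := by
          rintro rfl
          exact hz.2 ⟨(SimpleGraph.mem_edgeSet F).mpr hz.1, Sym2.mem_mk_left _ _⟩
        simp [Finset.mem_erase, hwv, hws]
      have hcard : F.edgeFinset.card ≤ F'.edgeFinset.card + d := by
        have hsets : (↑(F.incidenceFinset v) : Set (Sym2 V)) = F.incidenceSet v :=
          Set.coe_toFinset _
        have h1 : F'.edgeFinset = F.edgeFinset \ F.incidenceFinset v := by
          ext e; simp [hF']
        have h2 : F.edgeFinset ⊆ F'.edgeFinset ∪ F.incidenceFinset v := by
          rw [h1]; intro e he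
          by_cases hmem : e ∈ F.incidenceFinset v
          · exact Finset.mem_union_right _ hmem
          · exact Finset.mem_union_left _ (Finset.mem_sdiff.mpr ⟨he, hmem⟩)
        calc F.edgeFinset.card ≤ (F'.edgeFinset ∪ F.incidenceFinset v).card :=
              Finset.card_le_card h2
          _ ≤ F'.edgeFinset.card + (F.incidenceFinset v).card := Finset.card_union_le _ _
          _ ≤ F'.edgeFinset.card + d := by
              rw [SimpleGraph.card_incidenceFinset_eq_degree]
              omega
      have hrec := ihs (s.erase v) (Finset.erase_ssubset hvs) F' hF'nsc hF'sup
      have hserase : (s.erase v).card = s.card - 1 := Finset.card_erase_of_mem hvs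
      have hscard : 1 ≤ s.card := Finset.card_pos.mpr ⟨v, hvs⟩
      calc F.edgeFinset.card ≤ F'.edgeFinset.card + d := hcard
        _ ≤ d * (s.erase v).card + d := by convert Nat.add_le_add_right hrec d
        _ = d * (s.card - 1) + d := by rw [hserase]
        _ = d * s.card := by
            have : s.card - 1 + 1 = s.card := by omega
            calc d * (s.card - 1) + d = d * ((s.card - 1) + 1) := by ring
              _ = d * s.card := by rw [this]
lemma walk_scale {G H : SimpleGraph V} {t : ℕ}
    (hadj : ∀ u v, G.Adj u v → ∃ q : H.Walk u v, q.length ≤ t) :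
    ∀ {u v : V} (p : G.Walk u v), ∃ q : H.Walk u v, q.length ≤ t * p.length := by
  intro u v p
  induction p with
  | nil => exact ⟨.nil, by simp⟩
  | @cons a b c h p' ih =>
    obtain ⟨q1, hq1⟩ := hadj _ _ h
    obtain ⟨q2, hq2⟩ := ih
    refine ⟨q1.append q2, ?_⟩
    rw [SimpleGraph.Walk.length_append, SimpleGraph.Walk.length_cons]
    calc q1.length + q2.length ≤ t + t * p'.length := add_le_add hq1 hq2
      _ = t * (p'.length + 1) := by ring

end Span16
/-- There is a universal constant `C > 0` such that for every integer
`k ≥ 1`, every finite simple unweighted graph `G` on `n ≥ 2` vertices has a subgraph `H`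
with at most `C * k * n^(1 + 1/k) * log n` edges that is a `(2k - 1)`-spanner of `G`. -/
theorem stmt16 :
    ∃ C : ℝ, 0 < C ∧
      ∀ (k : ℕ), 1 ≤ k →
        ∀ (V : Type) [Fintype V] (G : SimpleGraph V),
          2 ≤ Fintype.card V →
          ∃ H : SimpleGraph V, H ≤ G ∧
            (H.edgeSet.ncard : ℝ) ≤
              C * (k : ℝ) * (Fintype.card V : ℝ) ^ (1 + 1 / (k : ℝ)) *
                Real.log (Fintype.card V) ∧
            ∀ u v : V, G.Reachable u v →
              H.Reachable u v ∧
                (H.dist u v : ℝ) ≤ (2 * (k : ℝ) - 1) * (G.dist u v : ℝ) := by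
  refine ⟨4, by norm_num, ?_⟩
  intro k hk V _ G hn2
  obtain ⟨H, hHG, hHnsc, hHspan⟩ := Span16.exists_girth_spanner G k hk
  refine ⟨H, hHG, ?_, ?_⟩
  · -- edge count
    set n := Fintype.card V with hn
    set x : ℝ := (n : ℝ) ^ (1 / (k : ℝ)) with hx
    have hk0 : (k : ℝ) ≠ 0 := Nat.cast_ne_zero.mpr (by omega)
    have hnpos : (0 : ℝ) < n := by
      have : (2 : ℝ) ≤ n := by exact_mod_cast hn2
      linarith
    have hx1 : (1 : ℝ) ≤ x := by
      rw [hx]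
      apply Real.one_le_rpow
      · exact_mod_cast le_trans (by norm_num) hn2
      · positivity
    set d : ℕ := ⌈x⌉₊ with hd
    have hd1 : 1 ≤ d := Nat.one_le_ceil_iff.mpr (by linarith)
    have hdk : n ≤ d ^ k := by
      have h2 : x ≤ (d : ℝ) := Nat.le_ceil _
      have h1 : (n : ℝ) ≤ (d : ℝ) ^ k := by
        calc (n : ℝ) = x ^ (k : ℕ) := by
              rw [hx, ← Real.rpow_natCast ((n : ℝ) ^ (1 / (k : ℝ))) k,
                ← Real.rpow_mul (le_of_lt hnpos)]
              rw [one_div_mul_cancel hk0, Real.rpow_one]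
          _ ≤ (d : ℝ) ^ k := by
              apply pow_le_pow_left₀ (by linarith) h2
      exact_mod_cast h1
    have hedge : H.edgeFinset.card ≤ d * n := by
      have := Span16.sparse_aux hk hd1 hdk Finset.univ H hHnsc (by simp)
      simpa using this
    have hncard : H.edgeSet.ncard = H.edgeFinset.card := by
      rw [← SimpleGraph.coe_edgeFinset, Set.ncard_coe_finset]
    have hdle : (d : ℝ) ≤ x + 1 := le_of_lt (Nat.ceil_lt_add_one (by linarith))
    have hrpow : (n : ℝ) ^ (1 + 1 / (k : ℝ)) = n * x := by
      rw [Real.rpow_add hnpos, Real.rpow_one, hx]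
    have hlog : Real.log 2 ≤ Real.log n := by
      apply Real.log_le_log (by norm_num)
      exact_mod_cast hn2
    have hlog2 : (0.6931471803 : ℝ) < Real.log 2 := Real.log_two_gt_d9
    have hk1 : (1 : ℝ) ≤ k := by exact_mod_cast hk
    have hcast : (H.edgeSet.ncard : ℝ) ≤ (d : ℝ) * n := by
      rw [hncard]
      exact_mod_cast hedge
    rw [hrpow]
    have hnn : (2 : ℝ) ≤ n := by exact_mod_cast hn2
    nlinarith [mul_le_mul_of_nonneg_right hdle (le_of_lt hnpos),
      mul_pos hnpos (lt_of_lt_of_le zero_lt_one hx1),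
      mul_le_mul_of_nonneg_left hlog (by positivity : (0:ℝ) ≤ 4 * k * (n * x)),
      mul_le_mul_of_nonneg_right hk1 (by positivity : (0:ℝ) ≤ n * x)]
  · intro u v hreach
    obtain ⟨p, hp⟩ := hreach.exists_walk_length_eq_dist
    obtain ⟨q, hq⟩ := Span16.walk_scale hHspan p
    refine ⟨q.reachable, ?_⟩
    have hdist : H.dist u v ≤ (2 * k - 1) * G.dist u v := by
      apply le_trans (SimpleGraph.dist_le q)
      rw [← hp]
      exact hq
    calc (H.dist u v : ℝ) ≤ (((2 * k - 1) * G.dist u v : ℕ) : ℝ) := Nat.cast_le.mpr hdist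
      _ = (2 * (k : ℝ) - 1) * (G.dist u v : ℝ) := by
          push_cast [Nat.cast_sub (by omega : 1 ≤ 2 * k)]
          ring
end
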